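/- arXiv:1511.04761 — 10 statements merged into one kernel-verified Lean document; each statement's English description precedes it below -/
import Mathlib

section
/- Let I be a set, let L, U be subsets of I, and for each i ∈ L let r̲_i : l_∞(I∖{i}) → ℝ be 1-Lipschitz and for each i ∈ U let r̄_i : l_∞(I∖{i}) → ℝ be 1-Lipschitz, with r̲_i(y) ≤ r̄_i(y) for all y whenever i ∈ L ∩ U. Define Q := { x ∈ l_∞(I) : r̲_i(π̂_i(x)) ≤ x_i for all i ∈ L, and x_i ≤ r̄_i(π̂_i(x)) for all i ∈ U }. If Q is non-empty, then Q (with the induced metric) is an injective metric space. -/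
universe u v w

/-- A metric space `X` is injective if for every pair of metric spaces `A`, `B`, every
isometric embedding `ι : A → B` and every `1`-Lipschitz map `f : A → X`, there is a
`1`-Lipschitz map `g : B → X` with `g ∘ ι = f`. -/
def IsInjectiveMetricSpace (X : Type u) [MetricSpace X] : Prop :=
  ∀ ⦃A : Type v⦄ ⦃B : Type w⦄ [MetricSpace A] [MetricSpace B],
    ∀ ι : A → B, Isometry ι → ∀ f : A → X, LipschitzWith 1 f →
      ∃ g : B → X, LipschitzWith 1 g ∧ ∀ a, g (ι a) = f a

/-- The map `l_∞(I) → l_∞(I \ {i})` dropping the `i`-th coordinate. -/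
noncomputable def dropCoord {I : Type u} (i : I) (x : lp (fun _ : I => ℝ) ⊤) :
    lp (fun _ : {j : I // j ≠ i} => ℝ) ⊤ :=
  ⟨fun j => x j.1, memℓp_infty ⟨‖x‖, by
    rintro s ⟨j, rfl⟩
    exact lp.norm_apply_le_norm ENNReal.top_ne_zero x j.1⟩⟩

namespace InjProof
open Set
attribute [local instance] Classical.propDecidable
variable {I : Type u}

noncomputable def mkL (f : I → ℝ) (C : ℝ) (h : ∀ i, |f i| ≤ C) : lp (fun _ : I => ℝ) ⊤ :=
  ⟨f, memℓp_infty ⟨C, by rintro s ⟨i, rfl⟩; exact (Real.norm_eq_abs _).trans_le (h i)⟩⟩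

@[simp] lemma mkL_apply (f : I → ℝ) (C : ℝ) (h : ∀ i, |f i| ≤ C) (i : I) :
    (mkL f C h) i = f i := rfl

lemma abs_apply_le_norm (x : lp (fun _ : I => ℝ) ⊤) (i : I) : |x i| ≤ ‖x‖ := by
  have h := lp.norm_apply_le_norm ENNReal.top_ne_zero x i
  rwa [Real.norm_eq_abs] at h

lemma norm_le_of {x : lp (fun _ : I => ℝ) ⊤} {C : ℝ} (hC : 0 ≤ C) (h : ∀ i, |x i| ≤ C) :
    ‖x‖ ≤ C :=
  lp.norm_le_of_forall_le hC fun i => by rw [Real.norm_eq_abs]; exact h i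

lemma abs_sub_apply_le (x y : lp (fun _ : I => ℝ) ⊤) (i : I) : |x i - y i| ≤ ‖x - y‖ := by
  have h := abs_apply_le_norm (x - y) i
  rwa [lp.coeFn_sub, Pi.sub_apply] at h

/-- The box `Π i, [a i, b i]` inside `l_∞(I)`. -/
def Box (a b : I → ℝ) : Set (lp (fun _ : I => ℝ) ⊤) :=
  {x | ∀ i, a i ≤ x i ∧ x i ≤ b i}

lemma mkL_mem_Box {a b : I → ℝ} (hab : ∀ i, a i ≤ b i) (C : ℝ) (h : ∀ i, |a i| ≤ C) :
    mkL a C h ∈ Box a b := fun i => ⟨le_rfl, hab i⟩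
/-- Sine–Soardi style fixed point theorem for 1-Lipschitz self-maps of a
nonempty bounded closed box in `l_∞(I)`. -/
theorem exists_fixedPoint_box {a₀ b₀ : I → ℝ} {C : ℝ}
    (hab : ∀ i, a₀ i ≤ b₀ i) (ha : ∀ i, |a₀ i| ≤ C) (hb : ∀ i, |b₀ i| ≤ C)
    (T : lp (fun _ : I => ℝ) ⊤ → lp (fun _ : I => ℝ) ⊤)
    (hT : ∀ x y, ‖T x - T y‖ ≤ ‖x - y‖)
    (hTm : MapsTo T (Box a₀ b₀) (Box a₀ b₀)) :
    ∃ x ∈ Box a₀ b₀, T x = x := by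
  by_cases hI : Nonempty I
  case neg =>
    have hIe : IsEmpty I := not_nonempty_iff.mp hI
    have hsub : ∀ u v : lp (fun _ : I => ℝ) ⊤, u = v := by
      intro u v; exact lp.ext (funext fun i => hIe.elim i)
    exact ⟨0, fun i => hIe.elim i, hsub _ _⟩
  obtain ⟨i₀⟩ := hI
  -- the family of nonempty invariant subboxes
  set 𝒮 : Set (Set (lp (fun _ : I => ℝ) ⊤)) :=
    {S | (∃ a b : I → ℝ, (∀ i, a₀ i ≤ a i ∧ a i ≤ b i ∧ b i ≤ b₀ i) ∧ S = Box a b) ∧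
      MapsTo T S S} with h𝒮
  -- bounds give lp membership
  have habs : ∀ {a b : I → ℝ}, (∀ i, a₀ i ≤ a i ∧ a i ≤ b i ∧ b i ≤ b₀ i) →
      ∀ i, |a i| ≤ C ∧ |b i| ≤ C := by
    intro a b h i
    obtain ⟨h1, h2, h3⟩ := h i
    have h4 := (abs_le.mp (ha i)).1
    have h5 := (abs_le.mp (hb i)).2
    constructor <;> rw [abs_le] <;> constructor <;> linarith
  have hmemBox : ∀ {a b : I → ℝ} (h : ∀ i, a₀ i ≤ a i ∧ a i ≤ b i ∧ b i ≤ b₀ i),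
      mkL a C (fun i => (habs h i).1) ∈ Box a b :=
    fun {a b} h => mkL_mem_Box (fun i => (h i).2.1) C _
  -- Zorn
  have hzorn : ∀ c ⊆ 𝒮, IsChain (· ⊆ ·) c → c.Nonempty →
      ∃ lb ∈ 𝒮, ∀ s ∈ c, lb ⊆ s := by
    intro c hc hchain hcne
    have : Nonempty c := hcne.to_subtype
    choose a b hbd heq using fun S : c => (hc S.2).1
    have hinv : ∀ S : c, MapsTo T S.1 S.1 := fun S => (hc S.2).2
    -- cross bound
    have hcross : ∀ S S' : c, ∀ i, a S i ≤ b S' i := by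
      intro S S' i
      rcases eq_or_ne S.1 S'.1 with h | h
      · obtain ⟨x, hx⟩ : (S'.1 : Set _).Nonempty :=
          ⟨_, h ▸ (heq S ▸ hmemBox (hbd S))⟩
        have hx' : x ∈ Box (a S') (b S') := heq S' ▸ hx
        have hx2 : x ∈ Box (a S) (b S) := heq S ▸ (h ▸ hx)
        exact (hx2 i).1.trans (hx' i).2
      · rcases hchain.total S.2 S'.2 with hss | hss
        · have hx : mkL (a S) C _ ∈ S'.1 := hss (heq S ▸ hmemBox (hbd S))
          have hx' : mkL (a S) C (fun i => (habs (hbd S) i).1) ∈ Box (a S') (b S') :=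
            heq S' ▸ hx
          exact le_trans (by simpa using (hmemBox (hbd S) i).1) (hx' i).2
        · have hx : mkL (a S') C _ ∈ S.1 := hss (heq S' ▸ hmemBox (hbd S'))
          have hx' : mkL (a S') C (fun i => (habs (hbd S') i).1) ∈ Box (a S) (b S) :=
            heq S ▸ hx
          exact (hx' i).1.trans (by simpa using (hbd S' i).2.1)
    set A : I → ℝ := fun i => ⨆ S : c, a S i with hA
    set B : I → ℝ := fun i => ⨅ S : c, b S i with hB
    have hbddA : ∀ i, BddAbove (range fun S : c => a S i) := by
      intro i
      exact ⟨b₀ i, by rintro _ ⟨S, rfl⟩; exact ((hbd S i).2.1).trans (hbd S i).2.2⟩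
    have hbddB : ∀ i, BddBelow (range fun S : c => b S i) := by
      intro i
      exact ⟨a₀ i, by rintro _ ⟨S, rfl⟩; exact (hbd S i).1.trans (hbd S i).2.1⟩
    have hAB : ∀ i, A i ≤ B i := by
      intro i
      refine ciSup_le fun S => le_ciInf fun S' => hcross S S' i
    have hbdAB : ∀ i, a₀ i ≤ A i ∧ A i ≤ B i ∧ B i ≤ b₀ i := by
      intro i
      refine ⟨?_, hAB i, ?_⟩
      · exact le_trans (hbd (Classical.arbitrary c) i).1 (le_ciSup (hbddA i) _)
      · exact le_trans (ciInf_le (hbddB i) (Classical.arbitrary c))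
          (hbd (Classical.arbitrary c) i).2.2
    have hiff : ∀ x, x ∈ ⋂₀ c ↔ x ∈ Box A B := by
      intro x
      constructor
      · intro hx i
        constructor
        · exact ciSup_le fun S => ((heq S ▸ hx S.1 S.2 : x ∈ Box (a S) (b S)) i).1
        · exact le_ciInf fun S => ((heq S ▸ hx S.1 S.2 : x ∈ Box (a S) (b S)) i).2
      · intro hx S hS
        have : x ∈ Box (a ⟨S, hS⟩) (b ⟨S, hS⟩) := by
          intro i
          exact ⟨le_trans (le_ciSup (hbddA i) ⟨S, hS⟩) (hx i).1,
            le_trans (hx i).2 (ciInf_le (hbddB i) ⟨S, hS⟩)⟩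
        rw [show S = (⟨S,hS⟩ : c).1 from rfl, heq ⟨S, hS⟩]; exact this
    have hsInt : ⋂₀ c = Box A B := Set.ext hiff
    refine ⟨⋂₀ c, ⟨⟨A, B, hbdAB, hsInt⟩, ?_⟩, fun s hs => Set.sInter_subset_of_mem hs⟩
    intro x hx S hS
    exact hinv ⟨S, hS⟩ (hx S hS)
  have h₀ : Box a₀ b₀ ∈ 𝒮 := ⟨⟨a₀, b₀, fun i => ⟨le_rfl, hab i, le_rfl⟩, rfl⟩, hTm⟩
  obtain ⟨S0, hS0sub, hS0min⟩ := zorn_superset_nonempty 𝒮 hzorn _ h₀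
  obtain ⟨⟨a, b, hbd, heq⟩, hinv⟩ := hS0min.prop
  -- canonical bounds from T-image
  have hS0ne : S0.Nonempty := ⟨_, heq ▸ hmemBox hbd⟩
  set a' : I → ℝ := fun i => sInf ((fun x => T x i) '' S0) with ha'
  set b' : I → ℝ := fun i => sSup ((fun x => T x i) '' S0) with hb'
  have himne : ∀ i : I, ((fun x => T x i) '' S0).Nonempty := fun i => hS0ne.image _
  have himbd : ∀ i, ∀ y ∈ (fun x => T x i) '' S0, a i ≤ y ∧ y ≤ b i := by
    rintro i _ ⟨x, hx, rfl⟩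
    have : T x ∈ Box a b := heq ▸ hinv hx
    exact this i
  have hbddb : ∀ i, BddBelow ((fun x => T x i) '' S0) :=
    fun i => ⟨a i, fun y hy => (himbd i y hy).1⟩
  have hbdda : ∀ i, BddAbove ((fun x => T x i) '' S0) :=
    fun i => ⟨b i, fun y hy => (himbd i y hy).2⟩
  have haa' : ∀ i, a i ≤ a' i := fun i => le_csInf (himne i) fun y hy => (himbd i y hy).1
  have hb'b : ∀ i, b' i ≤ b i := fun i => csSup_le (himne i) fun y hy => (himbd i y hy).2
  have ha'b' : ∀ i, a' i ≤ b' i := by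
    intro i
    obtain ⟨y, hy⟩ := himne i
    exact (csInf_le (hbddb i) hy).trans (le_csSup (hbdda i) hy)
  have hbd' : ∀ i, a₀ i ≤ a' i ∧ a' i ≤ b' i ∧ b' i ≤ b₀ i := fun i =>
    ⟨(hbd i).1.trans (haa' i), ha'b' i, (hb'b i).trans (hbd i).2.2⟩
  have hsub' : Box a' b' ⊆ S0 := by
    intro x hx
    rw [heq]
    exact fun i => ⟨(haa' i).trans (hx i).1, (hx i).2.trans (hb'b i)⟩
  have hTS0 : ∀ x ∈ S0, T x ∈ Box a' b' := by
    intro x hx i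
    exact ⟨csInf_le (hbddb i) ⟨x, hx, rfl⟩, le_csSup (hbdda i) ⟨x, hx, rfl⟩⟩
  have hS0eq : Box a' b' = S0 :=
    hS0min.eq_of_subset ⟨⟨a', b', hbd', rfl⟩,
      fun x hx => hTS0 x (hsub' hx)⟩ hsub'
  -- diameter of S0
  set d : ℝ := ⨆ i : I, (b' i - a' i) with hd
  have hbddw : BddAbove (range fun i : I => b' i - a' i) := by
    refine ⟨2 * C, ?_⟩
    rintro _ ⟨i, rfl⟩
    have h1 := (abs_le.mp ((habs hbd' i).1)).1
    have h2 := (abs_le.mp ((habs hbd' i).2)).2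
    show b' i - a' i ≤ 2 * C
    linarith
  have hdw : ∀ i, b' i - a' i ≤ d := fun i => le_ciSup hbddw i
  have hd0 : 0 ≤ d := le_trans (by linarith [ha'b' i₀]) (hdw i₀)
  -- center set
  set ac : I → ℝ := fun i => max (a' i) (b' i - d/2) with hac
  set bc : I → ℝ := fun i => min (b' i) (a' i + d/2) with hbc
  have hacbc : ∀ i, ac i ≤ bc i := by
    intro i
    have h1 := ha'b' i; have h2 := hdw i
    simp only [hac, hbc, max_le_iff, le_min_iff]
    exact ⟨⟨h1, by linarith⟩, ⟨by linarith, by linarith⟩⟩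
  have hbdc : ∀ i, a₀ i ≤ ac i ∧ ac i ≤ bc i ∧ bc i ≤ b₀ i := fun i =>
    ⟨(hbd' i).1.trans (le_max_left _ _), hacbc i, (min_le_left _ _).trans (hbd' i).2.2⟩
  have hcsub : Box ac bc ⊆ Box a' b' := fun x hx i =>
    ⟨(le_max_left _ _).trans (hx i).1, (hx i).2.trans (min_le_left _ _)⟩
  have hhalf : ∀ x ∈ Box ac bc, ∀ z ∈ S0, ‖x - z‖ ≤ d/2 := by
    intro x hx z hz
    have hz' : z ∈ Box a' b' := by rw [hS0eq]; exact hz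
    refine norm_le_of (by linarith) ?_
    intro i
    have hxl : b' i - d/2 ≤ x i := le_trans (le_max_right _ _) (hx i).1
    have hxu : x i ≤ a' i + d/2 := (hx i).2.trans (min_le_right _ _)
    have h3 := (hz' i).1; have h4 := (hz' i).2
    rw [lp.coeFn_sub, Pi.sub_apply, abs_le]; constructor <;> linarith
  have hcinv : MapsTo T (Box ac bc) (Box ac bc) := by
    intro x hx
    have hxS : x ∈ S0 := hsub' (hcsub hx)
    have hTx : T x ∈ Box a' b' := hTS0 x hxS
    intro i
    have hup : T x i ≤ a' i + d/2 := by
      have := le_of_forall_pos_le_add (a := T x i) (b := a' i + d/2) ?_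
      · linarith
      intro ε hε
      obtain ⟨y, ⟨z, hz, rfl⟩, hy⟩ :=
        exists_lt_of_csInf_lt (himne i) (show a' i < a' i + ε by linarith)
      have hd1 : ‖T x - T z‖ ≤ d/2 := (hT x z).trans (hhalf x hx z hz)
      have habs2 : |T x i - T z i| ≤ d/2 := (abs_sub_apply_le _ _ i).trans hd1
      have := (abs_le.mp habs2).2
      linarith
    have hlow : b' i - d/2 ≤ T x i := by
      have := le_of_forall_pos_le_add (a := b' i - d/2) (b := T x i) ?_
      · linarith
      intro ε hε
      obtain ⟨y, ⟨z, hz, rfl⟩, hy⟩ :=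
        exists_lt_of_lt_csSup (himne i) (show b' i - ε < b' i by linarith)
      have hd1 : ‖T x - T z‖ ≤ d/2 := (hT x z).trans (hhalf x hx z hz)
      have habs2 : |T x i - T z i| ≤ d/2 := (abs_sub_apply_le _ _ i).trans hd1
      have := (abs_le.mp habs2).1
      linarith
    exact ⟨max_le (hTx i).1 hlow, le_min (hTx i).2 hup⟩
  have hceq : Box ac bc = S0 :=
    hS0min.eq_of_subset ⟨⟨ac, bc, hbdc, rfl⟩, hcinv⟩ (hcsub.trans hsub')
  haveI : Nonempty I := ⟨i₀⟩
  have hd_le : d ≤ d / 2 := by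
    refine ciSup_le fun i => ?_
    have hbi : b' i ≤ a' i + d/2 := by
      refine csSup_le (himne i) ?_
      rintro _ ⟨z, hz, rfl⟩
      have h5 : T z ∈ Box ac bc := by
        rw [hceq, ← hS0eq]; exact hTS0 z hz
      exact (h5 i).2.trans (min_le_right _ _)
    linarith
  have hdz : d = 0 := by linarith
  set x := mkL a' C (fun i => (habs hbd' i).1) with hxdef
  have hxB : x ∈ Box a' b' := mkL_mem_Box ha'b' C _
  have hxS : x ∈ S0 := by rw [← hS0eq]; exact hxB
  have hTxB : T x ∈ Box a' b' := hTS0 x hxS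
  have hnz : ‖T x - x‖ ≤ 0 := by
    refine norm_le_of le_rfl ?_
    intro i
    have h1 := (hxB i).1; have h2 := (hxB i).2
    have h3 := (hTxB i).1; have h4 := (hTxB i).2
    have h5 := hdw i
    rw [lp.coeFn_sub, Pi.sub_apply, abs_le]; constructor <;> linarith
  exact ⟨x, hS0sub hxS, sub_eq_zero.mp (norm_le_zero_iff.mp hnz)⟩

lemma dropCoord_sub_norm (i : I) (x y : lp (fun _ : I => ℝ) ⊤) :
    ‖dropCoord i x - dropCoord i y‖ ≤ ‖x - y‖ := by
  refine norm_le_of (norm_nonneg _) ?_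
  intro j
  rw [lp.coeFn_sub, Pi.sub_apply]
  exact abs_sub_apply_le x y j.1

theorem hyperconvex {L U : Set I}
    {rlo rhi : (i : I) → (lp (fun _ : {j : I // j ≠ i} => ℝ) ⊤ → ℝ)}
    (hlo : ∀ i ∈ L, LipschitzWith 1 (rlo i))
    (hhi : ∀ i ∈ U, LipschitzWith 1 (rhi i))
    (hle : ∀ i ∈ L ∩ U, ∀ y, rlo i y ≤ rhi i y)
    {Q : Set (lp (fun _ : I => ℝ) ⊤)}
    (hQdef : Q = {x | (∀ i ∈ L, rlo i (dropCoord i x) ≤ x i) ∧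
                      (∀ i ∈ U, x i ≤ rhi i (dropCoord i x))})
    {J : Type v} [Nonempty J] (q : J → lp (fun _ : I => ℝ) ⊤) (hq : ∀ j, q j ∈ Q)
    (r : J → ℝ) (hr : ∀ j, 0 ≤ r j) (hpair : ∀ j k, ‖q j - q k‖ ≤ r j + r k) :
    ∃ x ∈ Q, ∀ j, ‖x - q j‖ ≤ r j := by
  obtain ⟨j₀⟩ := (inferInstance : Nonempty J)
  by_cases hI : Nonempty I
  case neg =>
    have hIe : IsEmpty I := not_nonempty_iff.mp hI
    refine ⟨q j₀, hq j₀, fun j => ?_⟩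
    have h0 : q j₀ - q j = 0 := lp.ext (funext fun i => hIe.elim i)
    rw [h0, norm_zero]; exact hr j
  -- pairwise coordinate bound
  have hqr : ∀ j k : J, ∀ i, q j i - r j ≤ q k i + r k := by
    intro j k i
    have h1 := (abs_le.mp ((abs_sub_apply_le (q j) (q k) i).trans (hpair j k))).2
    linarith
  set m : I → ℝ := fun i => ⨆ j, (q j i - r j) with hm
  set M : I → ℝ := fun i => ⨅ j, (q j i + r j) with hM
  have hbddm : ∀ i, BddAbove (range fun j => q j i - r j) := fun i =>
    ⟨q j₀ i + r j₀, by rintro _ ⟨j, rfl⟩; exact hqr j j₀ i⟩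
  have hbddM : ∀ i, BddBelow (range fun j => q j i + r j) := fun i =>
    ⟨q j₀ i - r j₀, by rintro _ ⟨j, rfl⟩; exact hqr j₀ j i⟩
  have hmM : ∀ i, m i ≤ M i := fun i => ciSup_le fun j => le_ciInf fun k => hqr j k i
  set C : ℝ := ‖q j₀‖ + r j₀ with hC
  have hqabs : ∀ i, |q j₀ i| ≤ ‖q j₀‖ := fun i => abs_apply_le_norm _ i
  have hmlow : ∀ i, q j₀ i - r j₀ ≤ m i := fun i => le_ciSup (hbddm i) j₀
  have hMhigh : ∀ i, M i ≤ q j₀ i + r j₀ := fun i => ciInf_le (hbddM i) j₀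
  have hCm : ∀ i, |m i| ≤ C := by
    intro i
    have h1 := hmlow i; have h2 := (hmM i).trans (hMhigh i)
    have h3 := abs_le.mp (hqabs i)
    rw [abs_le]; constructor <;> [linarith [h3.1]; linarith [h3.2]]
  have hCM : ∀ i, |M i| ≤ C := by
    intro i
    have h1 := (hmlow i).trans (hmM i); have h2 := hMhigh i
    have h3 := abs_le.mp (hqabs i)
    rw [abs_le]; constructor <;> [linarith [h3.1]; linarith [h3.2]]
  -- membership in the box gives the distance estimates
  have hBoxdist : ∀ x ∈ Box m M, ∀ j, ‖x - q j‖ ≤ r j := by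
    intro x hx j
    refine norm_le_of (hr j) ?_
    intro i
    have h1 : q j i - r j ≤ x i := (le_ciSup (hbddm i) j).trans (hx i).1
    have h2 : x i ≤ q j i + r j := (hx i).2.trans (ciInf_le (hbddM i) j)
    rw [lp.coeFn_sub, Pi.sub_apply, abs_le]; constructor <;> linarith
  -- constraints of the points q j
  have hqQ : ∀ j, (∀ i ∈ L, rlo i (dropCoord i (q j)) ≤ q j i) ∧
      (∀ i ∈ U, q j i ≤ rhi i (dropCoord i (q j))) := by
    intro j; have := hq j; rwa [hQdef] at this
  -- key facts
  have KF1 : ∀ x ∈ Box m M, ∀ i ∈ L, rlo i (dropCoord i x) ≤ M i := by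
    intro x hx i hiL
    refine le_ciInf fun j => ?_
    have hdist := (hlo i hiL).dist_le_mul (dropCoord i x) (dropCoord i (q j))
    rw [NNReal.coe_one, one_mul, Real.dist_eq, dist_eq_norm] at hdist
    have h2 := (dropCoord_sub_norm i x (q j)).trans (hBoxdist x hx j)
    have h4 := (hqQ j).1 i hiL
    have h5 := (abs_le.mp hdist).2
    linarith
  have KF2 : ∀ x ∈ Box m M, ∀ i ∈ U, m i ≤ rhi i (dropCoord i x) := by
    intro x hx i hiU
    refine ciSup_le fun j => ?_
    have hdist := (hhi i hiU).dist_le_mul (dropCoord i (q j)) (dropCoord i x)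
    rw [NNReal.coe_one, one_mul, Real.dist_eq, dist_eq_norm] at hdist
    have h2 : ‖dropCoord i (q j) - dropCoord i x‖ ≤ r j := by
      rw [norm_sub_rev]
      exact (dropCoord_sub_norm i x (q j)).trans (hBoxdist x hx j)
    have h4 := (hqQ j).2 i hiU
    have h5 := (abs_le.mp hdist).2
    linarith
  -- the clamping map
  set cf : I → lp (fun _ : I => ℝ) ⊤ → ℝ := fun i x =>
    if i ∈ L then
      (if i ∈ U then min (rhi i (dropCoord i x)) (max (rlo i (dropCoord i x)) (x i))
       else max (rlo i (dropCoord i x)) (x i))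
    else (if i ∈ U then min (rhi i (dropCoord i x)) (x i) else x i) with hcf
  have hTbound : ∀ x : lp (fun _ : I => ℝ) ⊤, ∀ i, |max (m i) (min (M i) (cf i x))| ≤ C := by
    intro x i
    have h1 := hmM i
    have h2 := abs_le.mp (hCm i); have h3 := abs_le.mp (hCM i)
    rw [abs_le]
    constructor
    · exact le_trans h2.1 (le_max_left _ _)
    · exact le_trans (max_le (h1.trans h3.2) ((min_le_left _ _).trans h3.2)) le_rfl
  set T : lp (fun _ : I => ℝ) ⊤ → lp (fun _ : I => ℝ) ⊤ :=
    fun x => mkL (fun i => max (m i) (min (M i) (cf i x))) C (hTbound x) with hTdef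
  have hTapp : ∀ x i, T x i = max (m i) (min (M i) (cf i x)) := fun x i => rfl
  have hTLip : ∀ x y, ‖T x - T y‖ ≤ ‖x - y‖ := by
    intro x y
    refine norm_le_of (norm_nonneg _) ?_
    intro i
    rw [lp.coeFn_sub, Pi.sub_apply, hTapp, hTapp]
    have hxy : |x i - y i| ≤ ‖x - y‖ := abs_sub_apply_le x y i
    have hkey : |cf i x - cf i y| ≤ ‖x - y‖ := by
      have hlo' : i ∈ L → |rlo i (dropCoord i x) - rlo i (dropCoord i y)| ≤ ‖x - y‖ := by
        intro hiL
        have hdist := (hlo i hiL).dist_le_mul (dropCoord i x) (dropCoord i y)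
        rw [NNReal.coe_one, one_mul, Real.dist_eq, dist_eq_norm] at hdist
        exact hdist.trans (dropCoord_sub_norm i x y)
      have hhi' : i ∈ U → |rhi i (dropCoord i x) - rhi i (dropCoord i y)| ≤ ‖x - y‖ := by
        intro hiU
        have hdist := (hhi i hiU).dist_le_mul (dropCoord i x) (dropCoord i y)
        rw [NNReal.coe_one, one_mul, Real.dist_eq, dist_eq_norm] at hdist
        exact hdist.trans (dropCoord_sub_norm i x y)
      by_cases hiL : i ∈ L <;> by_cases hiU : i ∈ U <;>
        simp only [hcf, if_pos, if_neg, hiL, hiU, if_true, if_false]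
      · exact (abs_min_sub_min_le_max _ _ _ _).trans
          (max_le (hhi' hiU) ((abs_max_sub_max_le_max _ _ _ _).trans
            (max_le (hlo' hiL) hxy)))
      · exact (abs_max_sub_max_le_max _ _ _ _).trans (max_le (hlo' hiL) hxy)
      · exact (abs_min_sub_min_le_max _ _ _ _).trans (max_le (hhi' hiU) hxy)
      · exact hxy
    have hmm : |m i - m i| ≤ ‖x - y‖ := by
      rw [sub_self, abs_zero]; exact norm_nonneg _
    have hMM : |M i - M i| ≤ ‖x - y‖ := by
      rw [sub_self, abs_zero]; exact norm_nonneg _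
    exact (abs_max_sub_max_le_max _ _ _ _).trans
      (max_le hmm ((abs_min_sub_min_le_max _ _ _ _).trans (max_le hMM hkey)))
  have hTmaps : MapsTo T (Box m M) (Box m M) := by
    intro x _ i
    rw [hTapp]
    exact ⟨le_max_left _ _, max_le (hmM i) (min_le_left _ _)⟩
  obtain ⟨x, hxBox, hfix⟩ := exists_fixedPoint_box hmM hCm hCM T hTLip hTmaps
  have hco : ∀ i, x i = max (m i) (min (M i) (cf i x)) := by
    intro i
    conv_lhs => rw [← hfix]
    exact hTapp x i
  refine ⟨x, ?_, fun j => hBoxdist x hxBox j⟩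
  rw [hQdef]
  constructor
  · intro i hiL
    have hKF1 := KF1 x hxBox i hiL
    by_cases hiU : i ∈ U
    · have hcfv : cf i x = min (rhi i (dropCoord i x))
          (max (rlo i (dropCoord i x)) (x i)) := by
        simp only [hcf, if_pos hiL, if_pos hiU]
      have hlohi := hle i ⟨hiL, hiU⟩ (dropCoord i x)
      have h1 : rlo i (dropCoord i x) ≤ cf i x := by
        rw [hcfv]; exact le_min hlohi (le_max_left _ _)
      rw [hco i]
      exact le_trans (le_min hKF1 h1) ((min_le_min_right _ le_rfl).trans
        (le_max_right _ _))
    · have hcfv : cf i x = max (rlo i (dropCoord i x)) (x i) := by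
        simp only [hcf, if_pos hiL, if_neg hiU]
      have h1 : rlo i (dropCoord i x) ≤ cf i x := by
        rw [hcfv]; exact le_max_left _ _
      rw [hco i]
      exact le_trans (le_min hKF1 h1) (le_max_right _ _)
  · intro i hiU
    have hKF2 := KF2 x hxBox i hiU
    have h1 : cf i x ≤ rhi i (dropCoord i x) := by
      by_cases hiL : i ∈ L
      · simp only [hcf, if_pos hiL, if_pos hiU]; exact min_le_left _ _
      · simp only [hcf, if_neg hiL, if_pos hiU]; exact min_le_left _ _
    rw [hco i]
    exact max_le hKF2 ((min_le_right _ _).trans h1)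

end InjProof

/-- If `Q ⊆ l_∞(I)` is a non-empty set cut out by inequalities
`r̲_i(π̂_i x) ≤ x_i` (for `i ∈ L`) and `x_i ≤ r̄_i(π̂_i x)` (for `i ∈ U`) given by
`1`-Lipschitz functions with `r̲_i ≤ r̄_i` whenever both are imposed, then `Q` with the
induced metric is an injective metric space. -/
theorem injective_of_lipschitz_inequalities {I : Type u} (L U : Set I)
    (rlo rhi : (i : I) → (lp (fun _ : {j : I // j ≠ i} => ℝ) ⊤ → ℝ))
    (hlo : ∀ i ∈ L, LipschitzWith 1 (rlo i))
    (hhi : ∀ i ∈ U, LipschitzWith 1 (rhi i))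
    (hle : ∀ i ∈ L ∩ U, ∀ y, rlo i y ≤ rhi i y)
    (Q : Set (lp (fun _ : I => ℝ) ⊤))
    (hQdef : Q = {x | (∀ i ∈ L, rlo i (dropCoord i x) ≤ x i) ∧
                      (∀ i ∈ U, x i ≤ rhi i (dropCoord i x))})
    (hQ : Q.Nonempty) :
    IsInjectiveMetricSpace.{u, v, w} Q := by
  classical
  intro A B _ _ ι hι f hf
  set R₀ : Set (B × Q) := Set.range (fun a : A => (ι a, f a)) with hR₀
  set 𝒢 : Set (Set (B × Q)) :=
    {R | R₀ ⊆ R ∧ ∀ p ∈ R, ∀ p' ∈ R, dist p.2 p'.2 ≤ dist p.1 p'.1} with h𝒢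
  have hR₀mem : R₀ ∈ 𝒢 := by
    refine ⟨le_rfl, ?_⟩
    rintro _ ⟨a, rfl⟩ _ ⟨a', rfl⟩
    have h1 := hf.dist_le_mul a a'
    rw [NNReal.coe_one, one_mul] at h1
    simpa [hι.dist_eq] using h1
  have hchain : ∀ c ⊆ 𝒢, IsChain (· ⊆ ·) c → c.Nonempty → ∃ ub ∈ 𝒢, ∀ s ∈ c, s ⊆ ub := by
    intro c hc hch hcne
    refine ⟨⋃₀ c, ⟨?_, ?_⟩, fun s hs => Set.subset_sUnion_of_mem hs⟩
    · obtain ⟨S, hS⟩ := hcne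
      exact (hc hS).1.trans (Set.subset_sUnion_of_mem hS)
    · rintro p ⟨S, hS, hp⟩ p' ⟨S', hS', hp'⟩
      rcases eq_or_ne S S' with rfl | hne
      · exact (hc hS).2 p hp p' hp'
      rcases hch hS hS' hne with h | h
      · exact (hc hS').2 p (h hp) p' hp'
      · exact (hc hS).2 p hp p' (h hp')
  obtain ⟨Mx, hR₀Mx, hMmax⟩ := zorn_subset_nonempty 𝒢 hchain R₀ hR₀mem
  have hMg : Mx ∈ 𝒢 := hMmax.prop
  have htot : ∀ b : B, ∃ qb : Q, (b, qb) ∈ Mx := by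
    intro b
    by_contra hb
    push_neg at hb
    rcases Set.eq_empty_or_nonempty Mx with hMe | hMne
    · obtain ⟨q0, hq0⟩ := hQ
      have hmem : insert (b, (⟨q0, hq0⟩ : Q)) Mx ∈ 𝒢 := by
        refine ⟨hR₀Mx.trans (Set.subset_insert _ _), ?_⟩
        intro p hp p' hp'
        rcases Set.mem_insert_iff.mp hp with rfl | hp
        · rcases Set.mem_insert_iff.mp hp' with rfl | hp'
          · simp
          · exact absurd hp' (by simp [hMe])
        · exact absurd hp (by simp [hMe])
      exact hb _ ((hMmax.2 hmem (Set.subset_insert _ _)) (Set.mem_insert _ _))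
    · haveI : Nonempty Mx := hMne.to_subtype
      obtain ⟨x, hxQ, hxd⟩ := InjProof.hyperconvex hlo hhi hle hQdef
        (fun p : Mx => (p.1.2 : lp (fun _ : I => ℝ) ⊤))
        (fun p => p.1.2.2)
        (fun p : Mx => dist b p.1.1)
        (fun p => dist_nonneg)
        (by
          intro p p'
          have h1 : ‖((p.1.2 : Q) : lp (fun _ : I => ℝ) ⊤) - ((p'.1.2 : Q) : lp (fun _ : I => ℝ) ⊤)‖
              = dist p.1.2 p'.1.2 := by
            rw [Subtype.dist_eq, dist_eq_norm]
          rw [h1]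
          have h2 := hMg.2 p.1 p.2 p'.1 p'.2
          have h3 := dist_triangle p.1.1 b p'.1.1
          have h4 := h2.trans h3
          rw [dist_comm p.1.1 b] at h4
          linarith)
      have hmem : insert (b, (⟨x, hxQ⟩ : Q)) Mx ∈ 𝒢 := by
        refine ⟨hR₀Mx.trans (Set.subset_insert _ _), ?_⟩
        intro p hp p' hp'
        rcases Set.mem_insert_iff.mp hp with rfl | hp
        · rcases Set.mem_insert_iff.mp hp' with rfl | hp'
          · simp
          · have h5 := hxd ⟨p', hp'⟩
            show dist (⟨x, hxQ⟩ : Q) p'.2 ≤ dist b p'.1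
            rw [Subtype.dist_eq, dist_eq_norm]
            exact h5
        · rcases Set.mem_insert_iff.mp hp' with rfl | hp'
          · have h5 := hxd ⟨p, hp⟩
            show dist p.2 (⟨x, hxQ⟩ : Q) ≤ dist p.1 b
            rw [dist_comm, Subtype.dist_eq, dist_eq_norm, dist_comm]
            exact h5
          · exact hMg.2 p hp p' hp'
      exact hb _ ((hMmax.2 hmem (Set.subset_insert _ _)) (Set.mem_insert _ _))
  choose g hg using htot
  have huniq : ∀ (b : B) (q1 q2 : Q), (b, q1) ∈ Mx → (b, q2) ∈ Mx → q1 = q2 := by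
    intro b q1 q2 h1 h2
    have h3 := hMg.2 (b, q1) h1 (b, q2) h2
    simp only [dist_self] at h3
    exact dist_le_zero.mp h3
  refine ⟨g, ?_, ?_⟩
  · refine LipschitzWith.of_dist_le_mul fun b b' => ?_
    rw [NNReal.coe_one, one_mul]
    exact hMg.2 (b, g b) (hg b) (b', g b') (hg b')
  · intro a
    exact huniq (ι a) _ _ (hg (ι a)) (hR₀Mx ⟨a, rfl⟩)
end

section
/- Let I be a set and let Q be a non-empty subset of l_∞(I) that is injective as a metric space with the induced metric. Then there exist subsets L, U of I and, for each i ∈ L, a 1-Lipschitz function r̲_i : l_∞(I∖{i}) → ℝ, and for each i ∈ U, a 1-Lipschitz function r̄_i : l_∞(I∖{i}) → ℝ, with r̲_i(y) ≤ r̄_i(y) for all y whenever i ∈ L ∩ U, such that Q = { x ∈ l_∞(I) : r̲_i(π̂_i(x)) ≤ x_i for all i ∈ L, and x_i ≤ r̄_i(π̂_i(x)) for all i ∈ U }. -/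
universe u v w

/-!
An injective `Q ⊆ ℓ∞(I)` is a `1`-Lipschitz retract of `ℓ∞(I)`, so every `x` has a point `z ∈ Q`
that is at least as close as `x` to every point of `Q`. The constraints come from the envelopes
`y ↦ inf_{q ∈ Q} (q i + ‖y - π̂_i q‖)` and `y ↦ sup_{q ∈ Q} (q i - ‖y - π̂_i q‖)`, which are
`1`-Lipschitz where finite and are satisfied by every point of `Q`. If `x` satisfies them, comparing
`z` with nearly extremal `q ∈ Q` in the `i`-th coordinate gives `|z i - x i| ≤ 2δ`, where `δ` is
half the gap by which the envelopes cross (and `0` if they do not), while `z ∈ Q` gives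
`|z i - x i| ≤ ‖x - z‖ - δ`. Hence `‖x - z‖ ≤ (2/3) ‖x - z‖`, so `x = z ∈ Q`.
-/

open Set

local notation "ℓ∞(" J ")" => lp (fun _ : J => ℝ) ⊤

theorem sub_le_two_mul_max_of_abs_sub_le {x z q d : ℝ} (hd : 0 ≤ d)
    (h : |z - q| ≤ max |x - q| d) : z - x ≤ 2 * max 0 (q + d - x) := by
  have hzq := (abs_le.1 h).2
  rcases le_total x q with hxq | hqx
  · rw [abs_of_nonpos (sub_nonpos.2 hxq)] at hzq
    rcases max_cases (-(x - q)) d with ⟨hm, -⟩ | ⟨hm, -⟩ <;>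
      linarith [le_max_right 0 (q + d - x)]
  · rw [abs_of_nonneg (sub_nonneg.2 hqx)] at hzq
    rcases max_cases (x - q) d with ⟨hm, -⟩ | ⟨hm, -⟩ <;>
      linarith [le_max_left 0 (q + d - x), le_max_right 0 (q + d - x)]

theorem sub_le_two_mul_max_of_abs_sub_le' {x z q d : ℝ} (hd : 0 ≤ d)
    (h : |z - q| ≤ max |x - q| d) : x - z ≤ 2 * max 0 (x - (q - d)) := by
  have := sub_le_two_mul_max_of_abs_sub_le (x := -x) (z := -z) (q := -q) hd
    (by simpa only [neg_sub_neg, abs_sub_comm] using h)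
  rw [show -q + d - -x = x - (q - d) by ring] at this
  linarith

theorem LipschitzWith.add_div_two {α : Type*} [PseudoMetricSpace α] {f g : α → ℝ}
    (hf : LipschitzWith 1 f) (hg : LipschitzWith 1 g) :
    LipschitzWith 1 fun y => (f y + g y) / 2 :=
  LipschitzWith.of_le_add fun x y => by
    have hfx := hf.dist_le_mul x y
    have hgx := hg.dist_le_mul x y
    simp only [NNReal.coe_one, one_mul, Real.dist_eq, abs_le] at hfx hgx
    linarith [hfx.1, hgx.1]

section InfConvolution

variable {ι Y : Type*} [PseudoMetricSpace Y] {a : ι → ℝ} {b : ι → Y}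

theorem BddBelow.range_add_dist {y : Y} (h : BddBelow (range fun k => a k + dist y (b k)))
    (y' : Y) : BddBelow (range fun k => a k + dist y' (b k)) := by
  obtain ⟨c, hc⟩ := h
  refine ⟨c - dist y y', ?_⟩
  rintro _ ⟨k, rfl⟩
  linarith [hc ⟨k, rfl⟩, dist_triangle y y' (b k)]

theorem BddAbove.range_sub_dist {y : Y} (h : BddAbove (range fun k => a k - dist y (b k)))
    (y' : Y) : BddAbove (range fun k => a k - dist y' (b k)) := by
  obtain ⟨c, hc⟩ := h
  refine ⟨c + dist y y', ?_⟩
  rintro _ ⟨k, rfl⟩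
  linarith [hc ⟨k, rfl⟩, dist_triangle y y' (b k)]

theorem lipschitzWith_ciInf_add_dist [Nonempty ι]
    (h : ∀ y, BddBelow (range fun k => a k + dist y (b k))) :
    LipschitzWith 1 fun y => ⨅ k, a k + dist y (b k) :=
  LipschitzWith.of_le_add fun y y' => by
    rw [← sub_le_iff_le_add]
    refine le_ciInf fun k => ?_
    linarith [ciInf_le (h y) k, dist_triangle y y' (b k)]

theorem lipschitzWith_ciSup_sub_dist [Nonempty ι]
    (h : ∀ y, BddAbove (range fun k => a k - dist y (b k))) :
    LipschitzWith 1 fun y => ⨆ k, a k - dist y (b k) :=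
  LipschitzWith.of_le_add fun y y' => by
    refine ciSup_le fun k => ?_
    linarith [le_ciSup (h y') k, dist_triangle y' y (b k), dist_comm y y']

end InfConvolution

theorem IsInjectiveMetricSpace.exists_mem_forall_dist_le {X : Type u} [MetricSpace X]
    {Q : Set X} (hQ : IsInjectiveMetricSpace.{u, u, u} Q) (x : X) :
    ∃ z ∈ Q, ∀ q ∈ Q, dist z q ≤ dist x q := by
  obtain ⟨ρ, hρ, hρQ⟩ := hQ Subtype.val isometry_subtype_coe id LipschitzWith.id
  refine ⟨ρ x, (ρ x).2, fun q hq => ?_⟩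
  simpa [Subtype.dist_eq, hρQ ⟨q, hq⟩] using hρ.dist_le_mul x q

section DropCoord

variable {I : Type u}

theorem abs_sub_apply_le_dist (x y : ℓ∞(I)) (i : I) : |x i - y i| ≤ dist x y := by
  simpa [dist_eq_norm] using lp.norm_apply_le_norm ENNReal.top_ne_zero (x - y) i

theorem dist_le_of_forall_abs_sub_apply_le {x y : ℓ∞(I)} {C : ℝ} (hC : 0 ≤ C)
    (h : ∀ i, |x i - y i| ≤ C) : dist x y ≤ C := by
  rw [dist_eq_norm]
  exact lp.norm_le_of_forall_le hC fun i => by simpa using h i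

theorem dist_dropCoord_le (i : I) (x y : ℓ∞(I)) :
    dist (dropCoord i x) (dropCoord i y) ≤ dist x y :=
  dist_le_of_forall_abs_sub_apply_le dist_nonneg fun j => abs_sub_apply_le_dist x y j

theorem dist_le_max_abs_sub_apply_dist_dropCoord (i : I) (x y : ℓ∞(I)) :
    dist x y ≤ max |x i - y i| (dist (dropCoord i x) (dropCoord i y)) := by
  refine dist_le_of_forall_abs_sub_apply_le ((abs_nonneg _).trans (le_max_left _ _)) fun j => ?_
  rcases eq_or_ne j i with rfl | hj
  · exact le_max_left _ _
  · exact le_max_of_le_right (abs_sub_apply_le_dist (dropCoord i x) (dropCoord i y) ⟨j, hj⟩)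

theorem sub_apply_le_of_dist_le {x z q : ℓ∞(I)} (i : I) (h : dist z q ≤ dist x q) :
    z i - x i ≤ 2 * max 0 (q i + dist (dropCoord i x) (dropCoord i q) - x i) :=
  sub_le_two_mul_max_of_abs_sub_le dist_nonneg <| (abs_sub_apply_le_dist z q i).trans <|
    h.trans (dist_le_max_abs_sub_apply_dist_dropCoord i x q)

theorem apply_sub_le_of_dist_le {x z q : ℓ∞(I)} (i : I) (h : dist z q ≤ dist x q) :
    x i - z i ≤ 2 * max 0 (x i - (q i - dist (dropCoord i x) (dropCoord i q))) :=
  sub_le_two_mul_max_of_abs_sub_le' dist_nonneg <| (abs_sub_apply_le_dist z q i).trans <|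
    h.trans (dist_le_max_abs_sub_apply_dist_dropCoord i x q)

end DropCoord

section Envelopes

variable {I : Type u} (Q : Set ℓ∞(I))

noncomputable def lowerEnvelope (i : I) (y : ℓ∞({j // j ≠ i})) : ℝ :=
  ⨅ q : Q, (q : ℓ∞(I)) i + dist y (dropCoord i q)

noncomputable def upperEnvelope (i : I) (y : ℓ∞({j // j ≠ i})) : ℝ :=
  ⨆ q : Q, (q : ℓ∞(I)) i - dist y (dropCoord i q)

def lowerBoundedCoords : Set I :=
  {i | ∀ y : ℓ∞({j // j ≠ i}),
    BddBelow (range fun q : Q => (q : ℓ∞(I)) i + dist y (dropCoord i q))}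

def upperBoundedCoords : Set I :=
  {i | ∀ y : ℓ∞({j // j ≠ i}),
    BddAbove (range fun q : Q => (q : ℓ∞(I)) i - dist y (dropCoord i q))}

/-- Where the two envelopes cross (as they do off the point itself when `Q` is a singleton), both
bounds are moved to the midpoint, which keeps them `1`-Lipschitz and ordered. -/
noncomputable def lowerBound (i : I) : ℓ∞({j // j ≠ i}) → ℝ :=
  open Classical in
  if i ∈ upperBoundedCoords Q then
    fun y => min (lowerEnvelope Q i y) ((lowerEnvelope Q i y + upperEnvelope Q i y) / 2)
  else lowerEnvelope Q i

noncomputable def upperBound (i : I) : ℓ∞({j // j ≠ i}) → ℝ :=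
  open Classical in
  if i ∈ lowerBoundedCoords Q then
    fun y => max (upperEnvelope Q i y) ((lowerEnvelope Q i y + upperEnvelope Q i y) / 2)
  else upperEnvelope Q i

variable {Q} {i : I}

theorem lipschitzWith_lowerEnvelope [Nonempty Q] (hi : i ∈ lowerBoundedCoords Q) :
    LipschitzWith 1 (lowerEnvelope Q i) :=
  lipschitzWith_ciInf_add_dist hi

theorem lipschitzWith_upperEnvelope [Nonempty Q] (hi : i ∈ upperBoundedCoords Q) :
    LipschitzWith 1 (upperEnvelope Q i) :=
  lipschitzWith_ciSup_sub_dist hi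

theorem lowerEnvelope_le_add_dist (hi : i ∈ lowerBoundedCoords Q) {q : ℓ∞(I)} (hq : q ∈ Q)
    (y : ℓ∞({j // j ≠ i})) : lowerEnvelope Q i y ≤ q i + dist y (dropCoord i q) :=
  ciInf_le (hi y) ⟨q, hq⟩

theorem sub_dist_le_upperEnvelope (hi : i ∈ upperBoundedCoords Q) {q : ℓ∞(I)} (hq : q ∈ Q)
    (y : ℓ∞({j // j ≠ i})) : q i - dist y (dropCoord i q) ≤ upperEnvelope Q i y :=
  le_ciSup (hi y) ⟨q, hq⟩

theorem exists_add_dist_lt [Nonempty Q] {y : ℓ∞({j // j ≠ i})} {c : ℝ}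
    (h : i ∈ lowerBoundedCoords Q → lowerEnvelope Q i y < c) :
    ∃ q ∈ Q, q i + dist y (dropCoord i q) < c := by
  by_cases hi : i ∈ lowerBoundedCoords Q
  · obtain ⟨⟨q, hq⟩, hlt⟩ := exists_lt_of_ciInf_lt (h hi)
    exact ⟨q, hq, hlt⟩
  · have hy : ¬BddBelow (range fun q : Q => (q : ℓ∞(I)) i + dist y (dropCoord i q)) :=
      fun hb => hi hb.range_add_dist
    obtain ⟨_, ⟨⟨q, hq⟩, rfl⟩, hlt⟩ := not_bddBelow_iff.1 hy c
    exact ⟨q, hq, hlt⟩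

theorem exists_lt_sub_dist [Nonempty Q] {y : ℓ∞({j // j ≠ i})} {c : ℝ}
    (h : i ∈ upperBoundedCoords Q → c < upperEnvelope Q i y) :
    ∃ q ∈ Q, c < q i - dist y (dropCoord i q) := by
  by_cases hi : i ∈ upperBoundedCoords Q
  · obtain ⟨⟨q, hq⟩, hlt⟩ := exists_lt_of_lt_ciSup (h hi)
    exact ⟨q, hq, hlt⟩
  · have hy : ¬BddAbove (range fun q : Q => (q : ℓ∞(I)) i - dist y (dropCoord i q)) :=
      fun hb => hi hb.range_sub_dist
    obtain ⟨_, ⟨⟨q, hq⟩, rfl⟩, hlt⟩ := not_bddAbove_iff.1 hy c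
    exact ⟨q, hq, hlt⟩

theorem lipschitzWith_lowerBound [Nonempty Q] (hi : i ∈ lowerBoundedCoords Q) :
    LipschitzWith 1 (lowerBound Q i) := by
  by_cases hU : i ∈ upperBoundedCoords Q
  · simpa only [lowerBound, if_pos hU, max_self] using (lipschitzWith_lowerEnvelope hi).min
      ((lipschitzWith_lowerEnvelope hi).add_div_two (lipschitzWith_upperEnvelope hU))
  · simpa only [lowerBound, if_neg hU] using lipschitzWith_lowerEnvelope hi

theorem lipschitzWith_upperBound [Nonempty Q] (hi : i ∈ upperBoundedCoords Q) :
    LipschitzWith 1 (upperBound Q i) := by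
  by_cases hL : i ∈ lowerBoundedCoords Q
  · simpa only [upperBound, if_pos hL, max_self] using (lipschitzWith_upperEnvelope hi).max
      ((lipschitzWith_lowerEnvelope hL).add_div_two (lipschitzWith_upperEnvelope hi))
  · simpa only [upperBound, if_neg hL] using lipschitzWith_upperEnvelope hi

theorem lowerBound_le_upperBound (hL : i ∈ lowerBoundedCoords Q) (hU : i ∈ upperBoundedCoords Q)
    (y : ℓ∞({j // j ≠ i})) : lowerBound Q i y ≤ upperBound Q i y := by
  simp only [lowerBound, upperBound, if_pos hL, if_pos hU]
  exact (min_le_right _ _).trans (le_max_right _ _)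

theorem lowerBound_le_lowerEnvelope (y : ℓ∞({j // j ≠ i})) :
    lowerBound Q i y ≤ lowerEnvelope Q i y := by
  unfold lowerBound
  split_ifs
  exacts [min_le_left _ _, le_rfl]

theorem upperEnvelope_le_upperBound (y : ℓ∞({j // j ≠ i})) :
    upperEnvelope Q i y ≤ upperBound Q i y := by
  unfold upperBound
  split_ifs
  exacts [le_max_left _ _, le_rfl]

theorem lowerBound_eq_lowerEnvelope {y : ℓ∞({j // j ≠ i})}
    (h : i ∈ upperBoundedCoords Q → lowerEnvelope Q i y ≤ upperEnvelope Q i y) :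
    lowerBound Q i y = lowerEnvelope Q i y := by
  unfold lowerBound
  split_ifs with hU
  exacts [min_eq_left (by linarith [h hU]), rfl]

theorem upperBound_eq_upperEnvelope {y : ℓ∞({j // j ≠ i})}
    (h : i ∈ lowerBoundedCoords Q → lowerEnvelope Q i y ≤ upperEnvelope Q i y) :
    upperBound Q i y = upperEnvelope Q i y := by
  unfold upperBound
  split_ifs with hL
  exacts [max_eq_left (by linarith [h hL]), rfl]

theorem lowerBound_eq_midpoint {y : ℓ∞({j // j ≠ i})} (hU : i ∈ upperBoundedCoords Q)
    (h : upperEnvelope Q i y ≤ lowerEnvelope Q i y) :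
    lowerBound Q i y = (lowerEnvelope Q i y + upperEnvelope Q i y) / 2 := by
  rw [lowerBound, if_pos hU]
  exact min_eq_right (by linarith)

theorem upperBound_eq_midpoint {y : ℓ∞({j // j ≠ i})} (hL : i ∈ lowerBoundedCoords Q)
    (h : upperEnvelope Q i y ≤ lowerEnvelope Q i y) :
    upperBound Q i y = (lowerEnvelope Q i y + upperEnvelope Q i y) / 2 := by
  rw [upperBound, if_pos hL]
  exact max_eq_right (by linarith)

end Envelopes

section Membership

variable {I : Type u} {Q : Set ℓ∞(I)} {x z : ℓ∞(I)} {i : I}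

theorem lowerBound_le_apply (hi : i ∈ lowerBoundedCoords Q) (hx : x ∈ Q) :
    lowerBound Q i (dropCoord i x) ≤ x i := by
  have := lowerEnvelope_le_add_dist hi hx (dropCoord i x)
  rw [dist_self, add_zero] at this
  exact (lowerBound_le_lowerEnvelope _).trans this

theorem apply_le_upperBound (hi : i ∈ upperBoundedCoords Q) (hx : x ∈ Q) :
    x i ≤ upperBound Q i (dropCoord i x) := by
  have := sub_dist_le_upperEnvelope hi hx (dropCoord i x)
  rw [dist_self, sub_zero] at this
  exact this.trans (upperEnvelope_le_upperBound _)

variable [Nonempty Q]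

theorem sub_apply_le_of_lowerEnvelope_le (hz : ∀ q ∈ Q, dist z q ≤ dist x q) {δ : ℝ}
    (hδ : 0 ≤ δ) (h : i ∈ lowerBoundedCoords Q → lowerEnvelope Q i (dropCoord i x) ≤ x i + δ) :
    z i - x i ≤ 2 * δ := by
  refine le_of_forall_pos_le_add fun ε hε => ?_
  obtain ⟨q, hq, hlt⟩ := exists_add_dist_lt (y := dropCoord i x) (c := x i + δ + ε / 2)
    fun hi => by linarith [h hi]
  have hmax : max 0 (q i + dist (dropCoord i x) (dropCoord i q) - x i) ≤ δ + ε / 2 :=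
    max_le (by linarith) (by linarith)
  linarith [sub_apply_le_of_dist_le i (hz q hq)]

theorem apply_sub_le_of_le_upperEnvelope (hz : ∀ q ∈ Q, dist z q ≤ dist x q) {δ : ℝ}
    (hδ : 0 ≤ δ) (h : i ∈ upperBoundedCoords Q → x i - δ ≤ upperEnvelope Q i (dropCoord i x)) :
    x i - z i ≤ 2 * δ := by
  refine le_of_forall_pos_le_add fun ε hε => ?_
  obtain ⟨q, hq, hlt⟩ := exists_lt_sub_dist (y := dropCoord i x) (c := x i - δ - ε / 2)
    fun hi => by linarith [h hi]
  have hmax : max 0 (x i - (q i - dist (dropCoord i x) (dropCoord i q))) ≤ δ + ε / 2 :=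
    max_le (by linarith) (by linarith)
  linarith [apply_sub_le_of_dist_le i (hz q hq)]

theorem abs_sub_apply_le_of_bounds (hzQ : z ∈ Q) (hz : ∀ q ∈ Q, dist z q ≤ dist x q)
    (hlo : i ∈ lowerBoundedCoords Q → lowerBound Q i (dropCoord i x) ≤ x i)
    (hhi : i ∈ upperBoundedCoords Q → x i ≤ upperBound Q i (dropCoord i x)) :
    |z i - x i| ≤ 2 / 3 * dist x z := by
  set y := dropCoord i x
  by_cases hcross : i ∈ lowerBoundedCoords Q ∧ i ∈ upperBoundedCoords Q ∧
      upperEnvelope Q i y < lowerEnvelope Q i y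
  · obtain ⟨hL, hU, hlt⟩ := hcross
    have hmid₁ := hlo hL
    have hmid₂ := hhi hU
    rw [lowerBound_eq_midpoint hU hlt.le] at hmid₁
    rw [upperBound_eq_midpoint hL hlt.le] at hmid₂
    set δ := (lowerEnvelope Q i y - upperEnvelope Q i y) / 2 with hδ
    have h₁ := sub_apply_le_of_lowerEnvelope_le (i := i) hz (δ := δ) (by linarith)
      fun _ => by linarith
    have h₂ := apply_sub_le_of_le_upperEnvelope (i := i) hz (δ := δ) (by linarith)
      fun _ => by linarith
    have h₃ := lowerEnvelope_le_add_dist hL hzQ y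
    have h₄ := sub_dist_le_upperEnvelope hU hzQ y
    have h₅ := dist_dropCoord_le i x z
    rw [abs_le]
    constructor <;> linarith
  · have hle : i ∈ lowerBoundedCoords Q → i ∈ upperBoundedCoords Q →
        lowerEnvelope Q i y ≤ upperEnvelope Q i y :=
      fun hL hU => not_lt.1 fun h => hcross ⟨hL, hU, h⟩
    have h₁ := sub_apply_le_of_lowerEnvelope_le hz le_rfl fun hL => by
      simpa [lowerBound_eq_lowerEnvelope (hle hL)] using hlo hL
    have h₂ := apply_sub_le_of_le_upperEnvelope hz le_rfl fun hU => by
      simpa [upperBound_eq_upperEnvelope (hle · hU)] using hhi hU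
    rw [abs_le]
    constructor <;> linarith [dist_nonneg (x := x) (y := z)]

theorem mem_of_bounds (hzQ : z ∈ Q) (hz : ∀ q ∈ Q, dist z q ≤ dist x q)
    (hlo : ∀ i ∈ lowerBoundedCoords Q, lowerBound Q i (dropCoord i x) ≤ x i)
    (hhi : ∀ i ∈ upperBoundedCoords Q, x i ≤ upperBound Q i (dropCoord i x)) : x ∈ Q := by
  have hD : dist x z ≤ 2 / 3 * dist x z :=
    dist_le_of_forall_abs_sub_apply_le (by positivity) fun i => by
      rw [abs_sub_comm]
      exact abs_sub_apply_le_of_bounds hzQ hz (hlo i) (hhi i)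
  rwa [dist_le_zero.1 (show dist x z ≤ 0 by linarith [dist_nonneg (x := x) (y := z)])]

end Membership

/-- If `Q` is a non-empty subset of `l_∞(I)` that is injective with the induced metric,
then `Q` is cut out by a family of inequalities `r̲_i(π̂_i x) ≤ x_i ≤ r̄_i(π̂_i x)` given by
`1`-Lipschitz functions, where lower bounds are imposed for `i ∈ L` and upper bounds for
`i ∈ U`, and `r̲_i ≤ r̄_i` whenever both are imposed. -/
theorem exists_lipschitz_inequalities_of_injective {I : Type u}
    (Q : Set (lp (fun _ : I => ℝ) ⊤)) (hQ : Q.Nonempty)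
    (hinj : IsInjectiveMetricSpace.{u, u, u} Q) :
    ∃ (L U : Set I)
      (rlo rhi : (i : I) → (lp (fun _ : {j : I // j ≠ i} => ℝ) ⊤ → ℝ)),
      (∀ i ∈ L, LipschitzWith 1 (rlo i)) ∧
      (∀ i ∈ U, LipschitzWith 1 (rhi i)) ∧
      (∀ i ∈ L ∩ U, ∀ y, rlo i y ≤ rhi i y) ∧
      Q = {x | (∀ i ∈ L, rlo i (dropCoord i x) ≤ x i) ∧
               (∀ i ∈ U, x i ≤ rhi i (dropCoord i x))} := by
  have : Nonempty Q := hQ.to_subtype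
  refine ⟨lowerBoundedCoords Q, upperBoundedCoords Q, lowerBound Q, upperBound Q,
    fun i => lipschitzWith_lowerBound, fun i => lipschitzWith_upperBound,
    fun i hi => lowerBound_le_upperBound hi.1 hi.2, ext fun x => ⟨fun hx => ?_, fun hx => ?_⟩⟩
  · exact ⟨fun i hi => lowerBound_le_apply hi hx, fun i hi => apply_le_upperBound hi hx⟩
  · obtain ⟨z, hzQ, hz⟩ := hinj.exists_mem_forall_dist_le x
    exact mem_of_bounds hzQ hz hx.1 hx.2
end

section
/- Let (X,d) be a metric space and x₀ ∈ X. Then X is injective if and only if for every R ∈ [0,∞) the closed ball B(x₀,R) = { y ∈ X : d(x₀,y) ≤ R } (with the induced metric) is injective. -/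
universe u v w

/-!
Injective metric spaces are exactly the hyperconvex ones: every family of closed balls
`B(c i, r i)` with `dist (c i) (c j) ≤ r i + r j` has a common point. (Extend the graph of a
partial short map one point at a time by Zorn's lemma; conversely, adjoin to `range c` a point
at distance `⨅ i, r i + dist a (c i)` from each `a`.) Closed balls of a hyperconvex space are
hyperconvex, so it remains to show that `X` is hyperconvex when all balls `B(x₀, R)` are.

Replacing `r` by `h u = ⨅ i, r i + dist u (c i)`, one needs `p` with `dist p u ≤ h u` for all
`u`. The points satisfying these constraints for `u ∈ B(x₀, S)` form a nonempty set
`G S ⊆ B(x₀, h x₀)`, decreasing in `S`. One more ball gives `p` with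
`dist p z ≤ sup_{a ∈ G S} dist z a` for all `S` and all `z ∈ B(x₀, 6 h x₀)`, which settles
the constraint at such `z`. For `u` farther out, a point `z` within `L = dist p u - 3 h x₀` of `u`
and within `dist a u - L` of each `a ∈ G S`, `S = dist u x₀`, still lies in `B(x₀, 6 h x₀)`,
and `dist p u ≤ dist p z + L ≤ h u`.
-/
open Metric Set NNReal

def Hyperconvex (X : Type u) [MetricSpace X] : Prop :=
  ∀ (ι : Type u) (c : ι → X) (r : ι → ℝ),
    (∀ i j, dist (c i) (c j) ≤ r i + r j) → ∃ p : X, ∀ i, dist p (c i) ≤ r i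

section InfRadius

variable {X : Type*} [PseudoMetricSpace X] {ι : Type*} {c : ι → X} {r : ι → ℝ}

theorem radius_nonneg_of_dist_le_add (hcr : ∀ i j, dist (c i) (c j) ≤ r i + r j) (i : ι) :
    0 ≤ r i := by
  linarith [hcr i i, dist_self (c i)]

noncomputable def infRadius (c : ι → X) (r : ι → ℝ) (u : X) : ℝ :=
  ⨅ i, (r i + dist u (c i))

theorem infRadius_le (hcr : ∀ i j, dist (c i) (c j) ≤ r i + r j) (u : X) (i : ι) :
    infRadius c r u ≤ r i + dist u (c i) :=
  ciInf_le ⟨0, forall_mem_range.2 fun j =>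
    add_nonneg (radius_nonneg_of_dist_le_add hcr j) dist_nonneg⟩ i

theorem infRadius_apply_le (hcr : ∀ i j, dist (c i) (c j) ≤ r i + r j) (i : ι) :
    infRadius c r (c i) ≤ r i := by
  simpa using infRadius_le hcr (c i) i

theorem infRadius_le_add_dist [Nonempty ι] (hcr : ∀ i j, dist (c i) (c j) ≤ r i + r j)
    (u v : X) : infRadius c r u ≤ infRadius c r v + dist u v := by
  rw [← sub_le_iff_le_add]
  exact le_ciInf fun i => by linarith [infRadius_le hcr u i, dist_triangle u v (c i)]

theorem dist_le_infRadius_add [Nonempty ι] (hcr : ∀ i j, dist (c i) (c j) ≤ r i + r j)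
    (u v : X) : dist u v ≤ infRadius c r u + infRadius c r v := by
  rw [← sub_le_iff_le_add]
  refine le_ciInf fun i => ?_
  rw [sub_le_comm]
  exact le_ciInf fun j => by
    linarith [dist_triangle u (c i) v, dist_triangle (c i) (c j) v, hcr i j, dist_comm (c j) v]

end InfRadius

section FarDist

variable {X : Type*} [PseudoMetricSpace X] {s t : Set X} {a z : X}

noncomputable def farDist (s : Set X) (z : X) : ℝ :=
  sSup (dist z '' s)

theorem dist_le_farDist (hs : Bornology.IsBounded s) (ha : a ∈ s) (z : X) :
    dist z a ≤ farDist s z := by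
  obtain ⟨R, hR⟩ := hs.subset_closedBall z
  refine le_csSup ⟨R, forall_mem_image.2 fun b hb => ?_⟩ ⟨a, ha, rfl⟩
  rw [dist_comm]
  exact hR hb

theorem farDist_le (hs : s.Nonempty) {B : ℝ} (hB : ∀ a ∈ s, dist z a ≤ B) :
    farDist s z ≤ B :=
  csSup_le (hs.image _) (forall_mem_image.2 hB)

theorem dist_le_farDist_add_farDist (hs : Bornology.IsBounded s) (hts : t ⊆ s)
    (ht : t.Nonempty) (z z' : X) : dist z z' ≤ farDist s z + farDist t z' := by
  obtain ⟨a, ha⟩ := ht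
  calc dist z z' ≤ dist z a + dist z' a := dist_triangle_right z z' a
    _ ≤ farDist s z + farDist t z' :=
      add_le_add (dist_le_farDist hs (hts ha) z) (dist_le_farDist (hs.subset hts) ha z')

end FarDist

def ballInter {X : Type*} [PseudoMetricSpace X] (h : X → ℝ) (s : Set X) : Set X :=
  ⋂ u ∈ s, closedBall u (h u)

theorem mem_ballInter {X : Type*} [PseudoMetricSpace X] {h : X → ℝ} {s : Set X} {y : X} :
    y ∈ ballInter h s ↔ ∀ u ∈ s, dist y u ≤ h u := by
  simp [ballInter]

namespace Hyperconvex

variable {X : Type u} [MetricSpace X]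

theorem exists_mem {s : Set X} (hs : Hyperconvex s) {ι : Type u} (c : ι → X) (r : ι → ℝ)
    (hc : ∀ i, c i ∈ s) (hcr : ∀ i j, dist (c i) (c j) ≤ r i + r j) :
    ∃ p ∈ s, ∀ i, dist p (c i) ≤ r i := by
  obtain ⟨p, hp⟩ := hs ι (fun i => ⟨c i, hc i⟩) r hcr
  exact ⟨p, p.2, hp⟩

theorem ballInter_nonempty {s : Set X} (hs : Hyperconvex s) {h : X → ℝ}
    (hh : ∀ u v, dist u v ≤ h u + h v) : (ballInter h s).Nonempty := by
  obtain ⟨p, -, hp⟩ := hs.exists_mem (fun u : s => u.1) (fun u => h u) (fun u => u.2)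
    fun u v => hh u v
  exact ⟨p, mem_ballInter.2 fun u hu => hp ⟨u, hu⟩⟩

theorem closedBall (hX : Hyperconvex X) (x₀ : X) {R : ℝ} (hR : 0 ≤ R) :
    Hyperconvex (closedBall x₀ R) := by
  intro ι c r hcr
  have hr := radius_nonneg_of_dist_le_add hcr
  have hc : ∀ i, dist (c i : X) x₀ ≤ R := fun i => (c i).2
  obtain ⟨p, hp⟩ := hX (Option ι) (fun i => i.elim x₀ (c ·)) (fun i => i.elim R r) <| by
    rintro (_ | i) (_ | j)
    · simpa using hR
    · simpa [dist_comm] using add_le_add (hc j) (hr j)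
    · simpa using add_le_add (hr i) (hc i)
    · exact hcr i j
  exact ⟨⟨p, by simpa using hp none⟩, fun i => hp (some i)⟩

theorem of_forall_exists_dist_le [Nonempty X]
    (H : ∀ h : X → ℝ, (∀ u v, dist u v ≤ h u + h v) → ∃ p, ∀ u, dist p u ≤ h u) :
    Hyperconvex X := by
  intro ι c r hcr
  cases isEmpty_or_nonempty ι
  · exact ⟨Classical.arbitrary X, isEmptyElim⟩
  obtain ⟨p, hp⟩ := H (infRadius c r) (dist_le_infRadius_add hcr)
  exact ⟨p, fun i => (hp (c i)).trans (infRadius_apply_le hcr i)⟩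

end Hyperconvex

section BallsToSpace

variable {X : Type u} [MetricSpace X] {x₀ : X} {h : X → ℝ} {p : X}

theorem ballInter_closedBall_subset {S : ℝ} (hS : 0 ≤ S) :
    ballInter h (closedBall x₀ S) ⊆ closedBall x₀ (h x₀) :=
  fun _ hy => mem_ballInter.1 hy x₀ (mem_closedBall_self hS)

theorem ballInter_closedBall_nonempty (hb : ∀ R, 0 ≤ R → Hyperconvex (closedBall x₀ R))
    (hh : ∀ u v, dist u v ≤ h u + h v) (S : ℝ≥0) :
    (ballInter h (closedBall x₀ S)).Nonempty :=
  (hb S S.2).ballInter_nonempty hh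

theorem exists_forall_dist_le_farDist (hb : ∀ R, 0 ≤ R → Hyperconvex (closedBall x₀ R))
    (hh : ∀ u v, dist u v ≤ h u + h v) :
    ∃ p, ∀ z ∈ closedBall x₀ (6 * h x₀), ∀ S : ℝ≥0,
      dist p z ≤ farDist (ballInter h (closedBall x₀ S)) z := by
  have hr₀ : 0 ≤ h x₀ := radius_nonneg_of_dist_le_add (c := id) hh x₀
  have key : ∀ (z z' : X) (S S' : ℝ≥0), S ≤ S' → dist z z' ≤
      farDist (ballInter h (closedBall x₀ S)) z + farDist (ballInter h (closedBall x₀ S')) z' :=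
    fun z z' S S' hSS' => dist_le_farDist_add_farDist
      (isBounded_closedBall.subset (ballInter_closedBall_subset S.2))
      (biInter_subset_biInter_left (closedBall_subset_closedBall hSS'))
      (ballInter_closedBall_nonempty hb hh S') z z'
  obtain ⟨p, -, hp⟩ := (hb _ (by positivity)).exists_mem
    (fun q : closedBall x₀ (6 * h x₀) × ℝ≥0 => (q.1 : X))
    (fun q => farDist (ballInter h (closedBall x₀ q.2)) q.1) (fun q => q.1.2) <| by
      rintro ⟨z, S⟩ ⟨z', S'⟩
      rcases le_total S S' with hSS' | hS'S
      · exact key z z' S S' hSS'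
      · rw [dist_comm, add_comm]
        exact key z' z S' S hS'S
  exact ⟨p, fun z hz S => hp (⟨z, hz⟩, S)⟩

theorem dist_le_of_forall_dist_le_farDist (hb : ∀ R, 0 ≤ R → Hyperconvex (closedBall x₀ R))
    (hh : ∀ u v, dist u v ≤ h u + h v)
    (hp : ∀ z ∈ closedBall x₀ (6 * h x₀), ∀ S : ℝ≥0,
      dist p z ≤ farDist (ballInter h (closedBall x₀ S)) z)
    {u : X} (hu : u ∈ closedBall x₀ (6 * h x₀)) : dist p u ≤ h u :=
  (hp u hu (nndist u x₀)).trans <| farDist_le (ballInter_closedBall_nonempty hb hh _)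
    fun a ha => by
      rw [dist_comm]
      exact mem_ballInter.1 ha u (by simp [mem_closedBall])

theorem dist_le_of_forall_dist_le_farDist_of_lt
    (hb : ∀ R, 0 ≤ R → Hyperconvex (closedBall x₀ R))
    (hh : ∀ u v, dist u v ≤ h u + h v)
    (hp : ∀ z ∈ closedBall x₀ (6 * h x₀), ∀ S : ℝ≥0,
      dist p z ≤ farDist (ballInter h (closedBall x₀ S)) z)
    {u : X} (hu : 6 * h x₀ < dist u x₀) : dist p u ≤ h u := by
  set r₀ := h x₀
  set G := ballInter h (closedBall x₀ (nndist u x₀))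
  set L := dist p u - 3 * r₀ with hL
  have hr₀ : 0 ≤ r₀ := radius_nonneg_of_dist_le_add (c := id) hh x₀
  have hpx₀ : dist p x₀ ≤ r₀ :=
    dist_le_of_forall_dist_le_farDist hb hh hp (mem_closedBall_self (by positivity))
  have hG : ∀ a ∈ G, dist a x₀ ≤ r₀ ∧ dist a u ≤ h u ∧ L + r₀ ≤ dist a u := by
    intro a ha
    have hax₀ : dist a x₀ ≤ r₀ := ballInter_closedBall_subset dist_nonneg ha
    refine ⟨hax₀, mem_ballInter.1 ha u (by simp [mem_closedBall]), ?_⟩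
    linarith [dist_triangle p a u, dist_triangle_right p a x₀]
  obtain ⟨a₀, ha₀⟩ := ballInter_closedBall_nonempty hb hh (nndist u x₀)
  obtain ⟨z, -, hz⟩ := (hb (dist u x₀) dist_nonneg).exists_mem
    (fun i : Option G => i.elim u (↑)) (fun i => i.elim L fun a => dist (a : X) u - L)
    (by rintro (_ | ⟨a, ha⟩) <;> simp [mem_closedBall]; linarith [(hG a ha).1]) <| by
      rintro (_ | ⟨a, ha⟩) (_ | ⟨b, hb⟩) <;> simp only [Option.elim]
      · linarith [dist_triangle_left u x₀ p, dist_self u]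
      · linarith [dist_comm u b]
      · linarith
      · linarith [hG a ha, hG b hb, dist_triangle_right a b x₀]
  have hzu : dist z u ≤ L := hz none
  have hza : ∀ a ∈ G, dist z a ≤ dist a u - L := fun a ha => hz (some ⟨a, ha⟩)
  have hz₀ : z ∈ closedBall x₀ (6 * r₀) := by
    rw [mem_closedBall]
    linarith [dist_triangle z a₀ x₀, hza a₀ ha₀, hG a₀ ha₀, dist_triangle_left a₀ u p,
      dist_triangle_right p a₀ x₀]
  have hpz : dist p z ≤ h u - L := (hp z hz₀ (nndist u x₀)).trans <|
    farDist_le ⟨a₀, ha₀⟩ fun a ha => by linarith [hza a ha, hG a ha]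
  linarith [dist_triangle p z u]

end BallsToSpace

theorem Hyperconvex.of_closedBall {X : Type u} [MetricSpace X] (x₀ : X)
    (hb : ∀ R, 0 ≤ R → Hyperconvex (Metric.closedBall x₀ R)) : Hyperconvex X := by
  have : Nonempty X := ⟨x₀⟩
  refine of_forall_exists_dist_le fun h hh => ?_
  obtain ⟨p, hp⟩ := exists_forall_dist_le_farDist hb hh
  refine ⟨p, fun u => ?_⟩
  rcases le_or_gt (dist u x₀) (6 * h x₀) with hu | hu
  · exact dist_le_of_forall_dist_le_farDist hb hh hp hu
  · exact dist_le_of_forall_dist_le_farDist_of_lt hb hh hp hu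

theorem Hyperconvex.isInjective {Y : Type u} [MetricSpace Y] (hY : Hyperconvex Y) :
    IsInjectiveMetricSpace.{u, u, u} Y := by
  intro A B _ _ j hj f hf
  let R : B × Y → B × Y → Prop := fun p q => dist p.2 q.2 ≤ dist p.1 q.1
  have dist_le {M : Set (B × Y)} (hM : M.Pairwise R) {p q} (hp : p ∈ M) (hq : q ∈ M) :
      dist p.2 q.2 ≤ dist p.1 q.1 := by
    rcases eq_or_ne p q with rfl | hpq
    · simp
    · exact hM hp hq hpq
  have hgraph : (range fun a => (j a, f a)).Pairwise R := by
    rintro _ ⟨a, rfl⟩ _ ⟨a', rfl⟩ -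
    simpa [R, hj.dist_eq] using hf.dist_le_mul a a'
  obtain ⟨M, hfM, hM⟩ := zorn_subset_nonempty {M | M.Pairwise R}
    (fun C hC hchain _ => ⟨⋃₀ C, (pairwise_sUnion hchain.directedOn).2 hC,
      fun _ => subset_sUnion_of_mem⟩) _ hgraph
  have hM_total : ∀ b, ∃ y, (b, y) ∈ M := fun b => by
    obtain ⟨y, hy⟩ := hY M (fun m => m.1.2) (fun m => dist b m.1.1) fun m m' => by
      linarith [dist_le hM.prop m.2 m'.2, dist_triangle_left m.1.1 m'.1.1 b]
    refine ⟨y, hM.mem_of_prop_insert (pairwise_insert.2 ⟨hM.prop, fun q hq _ => ?_⟩)⟩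
    exact ⟨hy ⟨q, hq⟩, by simpa only [R, dist_comm] using hy ⟨q, hq⟩⟩
  choose g hg using hM_total
  refine ⟨g, LipschitzWith.mk_one fun b b' => dist_le hM.prop (hg b) (hg b'), fun a => ?_⟩
  simpa using dist_le hM.prop (hg (j a)) (hfM ⟨a, rfl⟩)

noncomputable abbrev optionMetricSpace {A : Type*} [MetricSpace A] (ρ : A → ℝ)
    (hρ : ∀ a, 0 < ρ a) (hρ_le : ∀ a b, ρ a ≤ ρ b + dist a b)
    (hdist : ∀ a b, dist a b ≤ ρ a + ρ b) :
    MetricSpace (Option A) where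
  dist
    | none, none => 0
    | none, some b => ρ b
    | some a, none => ρ a
    | some a, some b => dist a b
  dist_self := by rintro (_ | a) <;> simp
  dist_comm := by rintro (_ | a) (_ | b) <;> simp [dist_comm]
  dist_triangle := by
    rintro (_ | a) (_ | b) (_ | e) <;> dsimp only
    · simp
    · simp
    · linarith [hρ b]
    · linarith [hρ_le e b, dist_comm b e]
    · simp
    · exact hdist a e
    · linarith [hρ_le a b]
    · exact dist_triangle a b e
  eq_of_dist_eq_zero := by
    rintro (_ | a) (_ | b) h
    · rfl
    · exact absurd h (hρ b).ne'
    · exact absurd h (hρ a).ne'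
    · exact congrArg some (eq_of_dist_eq_zero h)

theorem IsInjectiveMetricSpace.hyperconvex {Y : Type u} [MetricSpace Y] [Nonempty Y]
    (hY : IsInjectiveMetricSpace.{u, u, u} Y) : Hyperconvex Y := by
  intro ι c r hcr
  cases isEmpty_or_nonempty ι
  · exact ⟨Classical.arbitrary Y, isEmptyElim⟩
  by_cases hρ : ∃ a ∈ range c, infRadius c r a ≤ 0
  · obtain ⟨a, -, ha⟩ := hρ
    exact ⟨a, fun i => by
      linarith [dist_le_infRadius_add hcr a (c i), infRadius_apply_le hcr i]⟩
  push Not at hρ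
  let _ := optionMetricSpace (fun a : range c => infRadius c r a) (fun a => hρ a a.2)
    (fun a b => infRadius_le_add_dist hcr a b) (fun a b => dist_le_infRadius_add hcr a b)
  obtain ⟨g, hg, hgc⟩ := hY (some : range c → Option (range c))
    (Isometry.of_dist_eq fun _ _ => rfl) _ (LipschitzWith.subtype_val _)
  refine ⟨g none, fun i => ?_⟩
  calc dist (g none) (c i) = dist (g none) (g (some ⟨c i, i, rfl⟩)) := by rw [hgc]
    _ ≤ dist (none : Option (range c)) (some ⟨c i, i, rfl⟩) := by
      simpa using hg.dist_le_mul none (some ⟨c i, i, rfl⟩)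
    _ ≤ r i := infRadius_apply_le hcr i

/-- A metric space `X` is injective if and only if every closed ball `B(x₀, R)`, `R ≥ 0`,
with the induced metric, is injective. -/
theorem injective_iff_closedBall_injective {X : Type u} [MetricSpace X] (x₀ : X) :
    IsInjectiveMetricSpace.{u, u, u} X ↔
      ∀ R : ℝ, 0 ≤ R →
        IsInjectiveMetricSpace.{u, u, u} (Metric.closedBall x₀ R) := by
  have : Nonempty X := ⟨x₀⟩
  refine ⟨fun hX R hR => (hX.hyperconvex.closedBall x₀ hR).isInjective, fun hball => ?_⟩
  refine (Hyperconvex.of_closedBall x₀ fun R hR => ?_).isInjective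
  have : Nonempty (closedBall x₀ R) := ⟨⟨x₀, mem_closedBall_self hR⟩⟩
  exact (hball R hR).hyperconvex
end

section
/- Every injective metric space (X,d) is hyperconvex: X is non-empty, and for every family {(x_γ, r_γ)}_{γ∈Γ} in X × ℝ satisfying r_β + r_γ ≥ d(x_β, x_γ) for all β, γ ∈ Γ, the intersection ⋂_{γ∈Γ} B(x_γ, r_γ) of the closed balls B(x_γ,r_γ) = { y : d(x_γ,y) ≤ r_γ } is non-empty. -/
universe u v w

/-- The distance of a one-point extension of `X`, where the new point `none` has
distance `s y` to `y : X`. -/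
noncomputable def extDist {X : Type u} [MetricSpace X] (s : X → ℝ) :
    Option X → Option X → ℝ
  | some a, some b => dist a b
  | some a, none => s a
  | none, some b => s b
  | none, none => 0

/-- The one-point extension metric space. -/
noncomputable def extMetric {X : Type u} [MetricSpace X] (s : X → ℝ)
    (hpos : ∀ y, 0 < s y) (htri : ∀ a b, dist a b ≤ s a + s b)
    (hlip : ∀ a b, s a ≤ s b + dist a b) : MetricSpace (Option X) where
  dist := extDist s
  dist_self a := by cases a <;> simp [extDist]
  dist_comm a b := by cases a <;> cases b <;> simp [extDist, dist_comm]
  dist_triangle a b c := by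
    have h0 : ∀ y, 0 ≤ s y := fun y => (hpos y).le
    cases a <;> cases b <;> cases c <;> simp only [extDist]
    · simp
    · simp [h0]
    · linarith [h0 ‹X›]
    · rename_i b c; linarith [hlip c b, dist_comm b c]
    · simp [h0]
    · rename_i a c; exact htri a c
    · rename_i a b; linarith [hlip a b]
    · rename_i a b c; exact dist_triangle a b c
  eq_of_dist_eq_zero := by
    intro a b h
    cases a <;> cases b
    · rfl
    · exact absurd h (by simpa [extDist] using (hpos _).ne')
    · exact absurd h (by simpa [extDist] using (hpos _).ne')
    · exact congrArg some (eq_of_dist_eq_zero h)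

theorem exists_center {X : Type u} [MetricSpace X]
    (hX : IsInjectiveMetricSpace.{u, u, u} X) (s : X → ℝ)
    (hpos : ∀ y, 0 < s y) (htri : ∀ a b, dist a b ≤ s a + s b)
    (hlip : ∀ a b, s a ≤ s b + dist a b) :
    ∃ p : X, ∀ y, dist y p ≤ s y := by
  letI := extMetric s hpos htri hlip
  have hι : Isometry (some : X → Option X) := Isometry.of_dist_eq fun a b => rfl
  obtain ⟨g, hg, hgi⟩ := hX (some : X → Option X) hι id LipschitzWith.id
  refine ⟨g none, fun y => ?_⟩
  calc dist y (g none) = dist (g (some y)) (g none) := by rw [hgi y]; rfl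
    _ ≤ 1 * dist (some y) (none : Option X) := hg.dist_le_mul _ _
    _ = s y := by rw [one_mul]; rfl

/-- Every injective metric space is hyperconvex: it is non-empty, and every family of
closed balls `B(x γ, r γ)` with `dist (x β) (x γ) ≤ r β + r γ` for all indices has
non-empty intersection. -/
theorem injective_hyperconvex {X : Type u} [MetricSpace X]
    (hX : IsInjectiveMetricSpace.{u, u, u} X) :
    Nonempty X ∧
      ∀ {Γ : Type v} (x : Γ → X) (r : Γ → ℝ),
        (∀ β γ, dist (x β) (x γ) ≤ r β + r γ) →
        (⋂ γ, Metric.closedBall (x γ) (r γ)).Nonempty := by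
  have hne : Nonempty X := by
    obtain ⟨g, -, -⟩ := hX (A := ULift.{u} Empty) (B := PUnit.{u + 1})
      (fun _ => PUnit.unit) (fun a _ => a.down.elim)
      (fun a => a.down.elim) (fun a _ => a.down.elim)
    exact ⟨g PUnit.unit⟩
  refine ⟨hne, ?_⟩
  intro Γ x r hr
  rcases isEmpty_or_nonempty Γ with hΓ | hΓ
  · rw [Set.iInter_of_empty]
    exact Set.univ_nonempty
  · set s : X → ℝ := fun y => ⨅ γ, (r γ + dist y (x γ)) with hs
    have hr0 : ∀ γ, 0 ≤ r γ := by
      intro γ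
      have := hr γ γ
      rw [dist_self] at this
      linarith
    have hbdd : ∀ y, BddBelow (Set.range fun γ => r γ + dist y (x γ)) := by
      intro y
      refine ⟨0, ?_⟩
      rintro _ ⟨γ, rfl⟩
      have := dist_nonneg (x := y) (y := x γ)
      have := hr0 γ
      dsimp
      linarith
    have hsle : ∀ y γ, s y ≤ r γ + dist y (x γ) := fun y γ => ciInf_le (hbdd y) γ
    by_cases hpos : ∀ y, 0 < s y
    · have htri : ∀ a b, dist a b ≤ s a + s b := by
        intro a b
        rw [← sub_le_iff_le_add]
        have : dist a b - s a ≤ s b := by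
          apply le_ciInf
          intro γ
          rw [sub_le_iff_le_add]
          have : dist a b - (r γ + dist b (x γ)) ≤ s a := by
            apply le_ciInf
            intro β
            have h1 := hr β γ
            have h2 := dist_triangle4 a (x β) (x γ) b
            have h3 := dist_comm b (x γ)
            linarith
          linarith
        linarith
      have hlip : ∀ a b, s a ≤ s b + dist a b := by
        intro a b
        rw [← sub_le_iff_le_add]
        apply le_ciInf
        intro γ
        have h1 := hsle a γ
        have h2 := dist_triangle a b (x γ)
        linarith
      obtain ⟨p, hp⟩ := exists_center hX s hpos htri hlip
      refine ⟨p, Set.mem_iInter.2 fun γ => ?_⟩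
      rw [Metric.mem_closedBall]
      calc dist p (x γ) = dist (x γ) p := dist_comm _ _
        _ ≤ s (x γ) := hp (x γ)
        _ ≤ r γ + dist (x γ) (x γ) := hsle _ _
        _ = r γ := by simp
    · push_neg at hpos
      obtain ⟨y, hy⟩ := hpos
      refine ⟨y, Set.mem_iInter.2 fun γ => ?_⟩
      rw [Metric.mem_closedBall]
      have : dist y (x γ) - r γ ≤ s y := by
        apply le_ciInf
        intro β
        have h1 := hr γ β
        have h2 := dist_triangle y (x β) (x γ)
        have h3 := dist_comm (x β) (x γ)
        linarith
      linarith
end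

section
/- Every hyperconvex metric space (X,d) is injective: for every pair of metric spaces A, B, every isometric embedding i : A → B and every 1-Lipschitz map f : A → X, there exists a 1-Lipschitz map f̄ : B → X with f̄ ∘ i = f. -/
universe u v w

/-- Every hyperconvex metric space (non-empty, and every family of closed balls
`B(x γ, r γ)` with `dist (x β) (x γ) ≤ r β + r γ` for all indices has non-empty
intersection) is injective. -/
theorem hyperconvex_injective {X : Type u} [MetricSpace X]
    (hne : Nonempty X)
    (hX : ∀ {Γ : Type u} (x : Γ → X) (r : Γ → ℝ),
      (∀ β γ, dist (x β) (x γ) ≤ r β + r γ) →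
      (⋂ γ, Metric.closedBall (x γ) (r γ)).Nonempty) :
    IsInjectiveMetricSpace.{u, v, w} X := by
  intro A B _ _ ι hι f hf
  -- We work with "graphs" of partial 1-Lipschitz extensions of f.
  set S : Set (Set (B × X)) :=
    {G | (∀ a, (ι a, f a) ∈ G) ∧
      ∀ p ∈ G, ∀ q ∈ G, dist (p.2 : X) q.2 ≤ dist p.1 q.1} with hS
  have hG₀ : (Set.range fun a => (ι a, f a)) ∈ S := by
    constructor
    · intro a; exact ⟨a, rfl⟩
    · rintro p ⟨a, rfl⟩ q ⟨a', rfl⟩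
      calc dist (f a) (f a') ≤ 1 * dist a a' := hf.dist_le_mul a a'
        _ = dist (ι a) (ι a') := by rw [one_mul, hι.dist_eq]
  obtain ⟨G, -, hGS, hGmax⟩ := zorn_subset_nonempty S (fun c hcS hc hcne => by
      obtain ⟨G₁, hG₁⟩ := hcne
      refine ⟨⋃₀ c, ⟨fun a => Set.mem_sUnion.2 ⟨G₁, hG₁, (hcS hG₁).1 a⟩, ?_⟩,
        fun s hs => Set.subset_sUnion_of_mem hs⟩
      rintro p ⟨Gp, hGp, hpG⟩ q ⟨Gq, hGq, hqG⟩
      rcases hc.total hGp hGq with h | h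
      · exact (hcS hGq).2 p (h hpG) q hqG
      · exact (hcS hGp).2 p hpG q (h hqG)) _ hG₀
  -- Functionality of G
  have hfun : ∀ p ∈ G, ∀ q ∈ G, p.1 = q.1 → p.2 = q.2 := by
    intro p hp q hq h
    have := hGS.2 p hp q hq
    rw [h, dist_self] at this
    exact dist_le_zero.1 this
  -- Every point of B is in the domain of G
  have hdom : ∀ b : B, ∃ x : X, (b, x) ∈ G := by
    intro b
    by_contra hb
    push_neg at hb
    -- use hyperconvexity to find a point in all balls B(p.2, dist p.1 b), p ∈ G
    set Γ : Type u := {p : X × ℝ // ∃ q ∈ G, p = (q.2, dist q.1 b)} with hΓ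
    have key : ∀ β γ : Γ, dist β.1.1 γ.1.1 ≤ β.1.2 + γ.1.2 := by
      rintro ⟨_, p, hp, rfl⟩ ⟨_, q, hq, rfl⟩
      calc dist p.2 q.2 ≤ dist p.1 q.1 := hGS.2 p hp q hq
        _ ≤ dist p.1 b + dist b q.1 := dist_triangle _ _ _
        _ = dist p.1 b + dist q.1 b := by rw [dist_comm b]
    obtain ⟨y, hy⟩ := hX (fun γ : Γ => γ.1.1) (fun γ : Γ => γ.1.2) key
    have hyball : ∀ p ∈ G, dist (p.2 : X) y ≤ dist (p.1 : B) b := by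
      intro p hp
      have := Set.mem_iInter.1 hy ⟨(p.2, dist p.1 b), p, hp, rfl⟩
      simpa [dist_comm] using this
    -- insert (b, y) into G to contradict maximality
    have hins : insert (b, y) G ∈ S := by
      constructor
      · intro a; exact Set.mem_insert_of_mem _ (hGS.1 a)
      · rintro p (rfl | hp) q (rfl | hq)
        · simp
        · simpa [dist_comm] using hyball q hq
        · exact hyball p hp
        · exact hGS.2 p hp q hq
    have := hGmax hins (Set.subset_insert _ _) (Set.mem_insert _ _)
    exact hb y this
  choose g hg using hdom
  refine ⟨g, ?_, ?_⟩
  · refine LipschitzWith.of_dist_le_mul fun b b' => ?_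
    rw [NNReal.coe_one, one_mul]
    exact hGS.2 (b, g b) (hg b) (b', g b') (hg b')
  · intro a
    exact hfun (ι a, g (ι a)) (hg (ι a)) (ι a, f a) (hGS.1 a) rfl
end

section
/- Let X be an injective metric space and let {(x_γ, r_γ)}_{γ∈Γ} be a family in X × [0,∞). If the intersection ⋂_{γ∈Γ} B(x_γ, r_γ) of the closed balls B(x_γ,r_γ) = { y : d(x_γ,y) ≤ r_γ } is non-empty, then it is an injective metric space with the induced metric. -/
universe u v w

open Metric Set

/-- `X` together with one extra point. -/
@[reducible] def AddPt (X : Type u) := Option X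

/-- Candidate distance on `AddPt X` given a distance `D` from the extra point. -/
def addPtDist {X : Type u} [MetricSpace X] (D : X → ℝ) : AddPt X → AddPt X → ℝ
  | Option.some a, Option.some b => dist a b
  | Option.some a, Option.none => D a
  | Option.none, Option.some b => D b
  | Option.none, Option.none => 0

/-- The metric on `AddPt X`. -/
def addPtMetric {X : Type u} [MetricSpace X] (D : X → ℝ)
    (hpos : ∀ a, 0 < D a)
    (h2 : ∀ a b, dist a b ≤ D a + D b)
    (h1 : ∀ a b, D a ≤ dist a b + D b) : MetricSpace (AddPt X) where
  dist := addPtDist D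
  dist_self x := by cases x <;> simp [addPtDist]
  dist_comm x y := by
    cases x <;> cases y <;> simp [addPtDist, dist_comm]
  dist_triangle x y z := by
    cases x <;> cases y <;> cases z <;> simp only [addPtDist]
    · simp
    · linarith [hpos ‹X›]
    · linarith [hpos ‹X›]
    · rename_i b c; have := h1 c b; linarith [dist_comm b c]
    · linarith [hpos ‹X›]
    · rename_i a c; exact h2 a c
    · rename_i a b; exact h1 a b
    · exact dist_triangle _ _ _
  eq_of_dist_eq_zero := by
    intro x y h
    cases x <;> cases y
    · rfl
    · exact absurd h (by simpa [addPtDist] using (hpos _).ne')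
    · exact absurd h (by simpa [addPtDist] using (hpos _).ne')
    · simp only [addPtDist] at h
      exact congrArg Option.some (eq_of_dist_eq_zero h)

/-- An injective metric space is hyperconvex. -/
theorem hyperconvex_of_injective {X : Type u} [MetricSpace X]
    (hX : IsInjectiveMetricSpace.{u, u, u} X) (hX0 : Nonempty X)
    {ι : Type*} (x : ι → X) (r : ι → ℝ)
    (hpair : ∀ i j, dist (x i) (x j) ≤ r i + r j) :
    (⋂ i, closedBall (x i) (r i)).Nonempty := by
  classical
  rcases isEmpty_or_nonempty ι with hι | hι
  · obtain ⟨y⟩ := hX0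
    exact ⟨y, by simp⟩
  have hr : ∀ i, 0 ≤ r i := fun i => by
    have := hpair i i; simp at this; linarith
  set D : X → ℝ := fun a => ⨅ i, (r i + dist (x i) a) with hD
  have hbdd : ∀ a : X, BddBelow (Set.range fun i => r i + dist (x i) a) := by
    intro a
    exact ⟨0, by rintro _ ⟨i, rfl⟩; have := hr i; positivity⟩
  have hDle : ∀ a i, D a ≤ r i + dist (x i) a := fun a i => ciInf_le (hbdd a) i
  by_cases hdeg : ∃ a, D a ≤ 0
  · obtain ⟨a, ha⟩ := hdeg
    refine ⟨a, mem_iInter.2 fun j => ?_⟩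
    rw [mem_closedBall]
    refine le_of_forall_pos_le_add fun ε hε => ?_
    have : D a < ε := lt_of_le_of_lt ha hε
    obtain ⟨i, hi⟩ := exists_lt_of_ciInf_lt this
    have h3 := hpair j i
    have h4 := dist_triangle (x j) (x i) a
    have h5 : dist a (x j) = dist (x j) a := dist_comm _ _
    linarith
  · push_neg at hdeg
    have h2 : ∀ a b, dist a b ≤ D a + D b := by
      intro a b
      have key : ∀ i j, dist a b ≤ (r i + dist (x i) a) + (r j + dist (x j) b) := by
        intro i j
        have h3 := dist_triangle (x i) (x j) b
        have h4 := dist_triangle a (x i) b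
        have h5 := hpair i j
        have h6 : dist a (x i) = dist (x i) a := dist_comm _ _
        linarith
      have step1 : ∀ j, dist a b - (r j + dist (x j) b) ≤ D a :=
        fun j => le_ciInf fun i => by linarith [key i j]
      have step2 : dist a b - D a ≤ D b :=
        le_ciInf fun j => by linarith [step1 j]
      linarith
    have h1 : ∀ a b, D a ≤ dist a b + D b := by
      intro a b
      have : D a - dist a b ≤ D b := by
        refine le_ciInf fun i => ?_
        have h3 := hDle a i
        have h4 := dist_triangle (x i) b a
        have h5 : dist b a = dist a b := dist_comm _ _
        linarith
      linarith
    letI : MetricSpace (AddPt X) := addPtMetric D hdeg h2 h1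
    have hiso : Isometry (fun a : X => (Option.some a : AddPt X)) :=
      Isometry.of_dist_eq fun a b => rfl
    obtain ⟨g, hg, hgs⟩ := hX _ hiso id LipschitzWith.id
    refine ⟨g Option.none, mem_iInter.2 fun i => ?_⟩
    rw [mem_closedBall, dist_comm]
    have hd : dist (g (Option.some (x i) : AddPt X)) (g Option.none) ≤
        dist (Option.some (x i) : AddPt X) (Option.none : AddPt X) := by
      simpa using hg.dist_le_mul (Option.some (x i) : AddPt X) Option.none
    rw [hgs] at hd
    have : dist (Option.some (x i) : AddPt X) (Option.none : AddPt X) = D (x i) := rfl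
    rw [this] at hd
    have := hDle (x i) i
    simp only [dist_self, add_zero] at this
    exact hd.trans this

/-- The intersection of closed balls in an injective metric space is hyperconvex. -/
theorem hyperconvex_inter {X : Type u} [MetricSpace X]
    (hX : IsInjectiveMetricSpace.{u, u, u} X)
    {Γ : Type*} (x : Γ → X) (r : Γ → ℝ)
    (hne : (⋂ γ, closedBall (x γ) (r γ)).Nonempty)
    {ι : Type*} (y : ι → (⋂ γ, closedBall (x γ) (r γ))) (s : ι → ℝ)
    (hpair : ∀ i j, dist (y i) (y j) ≤ s i + s j) :
    (⋂ i, closedBall (y i) (s i)).Nonempty := by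
  obtain ⟨z0, hz0⟩ := hne
  have hz0' : ∀ γ, dist z0 (x γ) ≤ r γ := by
    intro γ; have := mem_iInter.1 hz0 γ; rwa [mem_closedBall] at this
  have hs : ∀ i, 0 ≤ s i := fun i => by
    have := hpair i i; simp at this; linarith
  have hy : ∀ i γ, dist (y i : X) (x γ) ≤ r γ := by
    intro i γ
    have := mem_iInter.1 (y i).2 γ
    rwa [mem_closedBall] at this
  set p : ι ⊕ Γ → X := Sum.elim (fun i => (y i : X)) x with hp
  set ρ : ι ⊕ Γ → ℝ := Sum.elim s r with hρ
  have hpρ : ∀ a b, dist (p a) (p b) ≤ ρ a + ρ b := by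
    rintro (i | γ) (j | δ) <;> simp only [hp, hρ, Sum.elim_inl, Sum.elim_inr]
    · rw [← Subtype.dist_eq]; exact hpair i j
    · have := hy i δ; linarith [hs i]
    · have := hy j γ; rw [dist_comm]; linarith [hs j]
    · have h1 := hz0' γ; have h2 := hz0' δ
      have := dist_triangle (x γ) z0 (x δ)
      rw [dist_comm (x γ) z0] at this
      linarith
  obtain ⟨z, hz⟩ := hyperconvex_of_injective hX ⟨z0⟩ p ρ hpρ
  have hzb : ∀ c, dist z (p c) ≤ ρ c := by
    intro c; have := mem_iInter.1 hz c; rwa [mem_closedBall] at this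
  have hzS : z ∈ ⋂ γ, closedBall (x γ) (r γ) :=
    mem_iInter.2 fun γ => by have := hzb (Sum.inr γ); rwa [mem_closedBall]
  refine ⟨⟨z, hzS⟩, mem_iInter.2 fun i => ?_⟩
  rw [mem_closedBall, Subtype.dist_eq]
  exact hzb (Sum.inl i)

/-- A nonempty hyperconvex metric space is injective. -/
theorem injective_of_hyperconvex {Y : Type u} [MetricSpace Y] (hY0 : Nonempty Y)
    (hY : ∀ {κ : Type (max u w)} (p : κ → Y) (ρ : κ → ℝ),
      (∀ a b, dist (p a) (p b) ≤ ρ a + ρ b) → (⋂ k, closedBall (p k) (ρ k)).Nonempty) :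
    IsInjectiveMetricSpace.{u, v, w} Y := by
  intro A B _ _ ι hι f hf
  classical
  set Rels : Set (Set (B × Y)) :=
    {t | (∀ a, (ι a, f a) ∈ t) ∧ ∀ p ∈ t, ∀ q ∈ t, dist (Prod.snd p) (Prod.snd q) ≤ dist (Prod.fst p) (Prod.fst q)} with hRels
  have h0 : (Set.range fun a => (ι a, f a)) ∈ Rels := by
    constructor
    · exact fun a => mem_range_self a
    · rintro _ ⟨a, rfl⟩ _ ⟨b, rfl⟩
      have := hf.dist_le_mul a b
      simpa [hι.dist_eq] using this
  obtain ⟨m, -, hmem, hmax⟩ :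
      ∃ m, (Set.range fun a => (ι a, f a)) ⊆ m ∧ Maximal (· ∈ Rels) m := by
    apply zorn_subset_nonempty
    · intro c hc hchain hcne
      obtain ⟨t0, ht0⟩ := hcne
      refine ⟨⋃₀ c, ⟨fun a => ⟨t0, ht0, (hc ht0).1 a⟩, ?_⟩, fun t ht => subset_sUnion_of_mem ht⟩
      rintro p ⟨t1, ht1, hp⟩ q ⟨t2, ht2, hq⟩
      rcases hchain.total ht1 ht2 with h | h
      · exact (hc ht2).2 p (h hp) q hq
      · exact (hc ht1).2 p hp q (h hq)
    · exact h0
  have htot : ∀ b : B, ∃ z, (b, z) ∈ m := by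
    intro b
    by_contra hb
    push_neg at hb
    set p : ↥m → Y := fun q => (q : B × Y).2 with hp
    set ρ : ↥m → ℝ := fun q => dist b (q : B × Y).1 with hρ
    have hpρ : ∀ q q', dist (p q) (p q') ≤ ρ q + ρ q' := by
      intro q q'
      have h1 := hmem.2 _ q.2 _ q'.2
      have h2 := dist_triangle (q : B × Y).1 b (q' : B × Y).1
      have h3 : dist (q : B × Y).1 b = dist b (q : B × Y).1 := dist_comm _ _
      simp only [hp, hρ]
      linarith
    obtain ⟨z, hz⟩ := hY p ρ hpρ
    have hz' : ∀ q : ↥m, dist z (q : B × Y).2 ≤ dist b (q : B × Y).1 := by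
      intro q; have := mem_iInter.1 hz q; rwa [mem_closedBall] at this
    have hins : insert (b, z) m ∈ Rels := by
      constructor
      · exact fun a => Or.inr (hmem.1 a)
      · rintro p' (rfl | hp') q' (rfl | hq')
        · simp
        · exact hz' ⟨q', hq'⟩
        · have := hz' ⟨p', hp'⟩
          rw [dist_comm, dist_comm (Prod.fst p') b]
          exact this
        · exact hmem.2 _ hp' _ hq'
    have : insert (b, z) m ⊆ m := hmax hins (subset_insert _ _)
    exact hb z (this (mem_insert _ _))
  have hfun : ∀ (b : B) (z z' : Y), (b, z) ∈ m → (b, z') ∈ m → z = z' := by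
    intro b z z' h h'
    have := hmem.2 _ h _ h'
    simpa using this
  choose g hg using htot
  refine ⟨g, ?_, ?_⟩
  · rw [lipschitzWith_iff_dist_le_mul]
    intro b b'
    have := hmem.2 _ (hg b) _ (hg b')
    simpa using this
  · intro a
    exact hfun (ι a) _ _ (hg (ι a)) (hmem.1 a)

/-- In an injective metric space, any intersection of closed balls `B(x γ, r γ)`,
`r γ ≥ 0`, which is non-empty is itself an injective metric space with the induced
metric. -/
theorem injective_iInter_closedBall {X : Type u} [MetricSpace X]
    (hX : IsInjectiveMetricSpace.{u, u, u} X)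
    {Γ : Type*} (x : Γ → X) (r : Γ → ℝ) (hr : ∀ γ, 0 ≤ r γ)
    (hne : (⋂ γ, Metric.closedBall (x γ) (r γ)).Nonempty) :
    IsInjectiveMetricSpace.{u, v, w} (⋂ γ, Metric.closedBall (x γ) (r γ)) := by
  refine injective_of_hyperconvex hne.to_subtype ?_
  intro κ p ρ hpρ
  exact hyperconvex_inter hX x r hne p ρ hpρ
end

section
/- Let I be a set, F ⊆ I a finite subset, λ ∈ [0,1), and for each i ∈ F let r̲_i, r̄_i : l_∞(I∖{i}) → ℝ be λ-Lipschitz functions with r̲_i(y) ≤ r̄_i(y) for all y. Let Q := { x ∈ l_∞(I) : r̲_i(π̂_i(x)) ≤ x_i ≤ r̄_i(π̂_i(x)) for all i ∈ F }. Then Q is non-empty and there exists a 1-Lipschitz retraction ρ : l_∞(I) → l_∞(I) with ρ(l_∞(I)) ⊆ Q and ρ(q) = q for all q ∈ Q. -/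
set_option maxHeartbeats 1000000
set_option synthInstance.maxHeartbeats 400000

universe u v w

namespace RetractAux

open scoped Classical

variable {I : Type u}

/-- Coordinates are controlled by the distance in `l_∞`. -/
lemma coord_dist_le (x y : lp (fun _ : I => ℝ) ⊤) (i : I) :
    |x i - y i| ≤ dist x y := by
  have h := lp.norm_apply_le_norm ENNReal.top_ne_zero (x - y) i
  rw [lp.coeFn_sub] at h
  rw [dist_eq_norm]
  simpa only [Pi.sub_apply, Real.norm_eq_abs] using h

/-- `dropCoord` is `1`-Lipschitz. -/
lemma dropCoord_dist_le (i : I) (x y : lp (fun _ : I => ℝ) ⊤) :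
    dist (dropCoord i x) (dropCoord i y) ≤ dist x y := by
  rw [dist_eq_norm]
  refine lp.norm_le_of_forall_le dist_nonneg fun j => ?_
  have : ((dropCoord i x - dropCoord i y : lp (fun _ : {j : I // j ≠ i} => ℝ) ⊤)) j
      = x j.1 - y j.1 := by
    rw [lp.coeFn_sub]; rfl
  rw [this]
  simpa [Real.norm_eq_abs] using coord_dist_le x y j.1

/-- The clamp of `t` into `[a, b]`. -/
def clamp (a b t : ℝ) : ℝ := max a (min t b)

lemma clamp_le (a b t : ℝ) (hab : a ≤ b) : clamp a b t ≤ b :=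
  max_le hab (min_le_right _ _)

lemma le_clamp (a b t : ℝ) : a ≤ clamp a b t := le_max_left _ _

lemma clamp_eq_of_mem {a b t : ℝ} (h1 : a ≤ t) (h2 : t ≤ b) : clamp a b t = t := by
  rw [clamp, min_eq_left h2, max_eq_right h1]

lemma abs_clamp_le (a b t : ℝ) : |clamp a b t| ≤ |a| + |b| + |t| := by
  have h1 : |max a (min t b)| ≤ max |a| |min t b| := by
    simpa using abs_max_sub_max_le_max a (min t b) 0 0
  have h2 : |min t b| ≤ max |t| |b| := by
    simpa using abs_min_sub_min_le_max t b 0 0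
  have ha := abs_nonneg a
  have hb := abs_nonneg b
  have ht := abs_nonneg t
  rw [clamp]
  exact h1.trans (max_le (by linarith)
    (h2.trans (max_le (by linarith) (by linarith))))

lemma clamp_lipschitz (a b t a' b' t' : ℝ) :
    |clamp a b t - clamp a' b' t'| ≤ max |a - a'| (max |t - t'| |b - b'|) :=
  (abs_max_sub_max_le_max _ _ _ _).trans
    (max_le_max le_rfl (abs_min_sub_min_le_max _ _ _ _))

/-- If `a ≤ t ≤ b`, clamping `t` into a nearby interval moves it only a little. -/
lemma clamp_dist_of_mem {a b t : ℝ} (a' b' : ℝ) (hat : a ≤ t) (htb : t ≤ b) :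
    |clamp a' b' t - t| ≤ max |a' - a| |b' - b| := by
  have h1 := le_abs_self (a' - a)
  have h2 := le_abs_self (b' - b)
  have h3 := neg_abs_le (b' - b)
  have h4 := neg_abs_le (a' - a)
  rw [clamp]
  rcases le_total t b' with hb | hb
  · rw [min_eq_left hb]
    rcases le_total a' t with ha | ha
    · rw [max_eq_right ha]
      simpa using le_max_of_le_left (abs_nonneg (a' - a))
    · rw [max_eq_left ha]
      refine le_max_of_le_left ?_
      rw [abs_of_nonneg (by linarith)]
      linarith
  · rw [min_eq_right hb]
    rcases le_total a' b' with hab | hab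
    · rw [max_eq_right hab]
      refine le_max_of_le_right ?_
      rw [abs_of_nonpos (by linarith)]
      linarith
    · rw [max_eq_left hab]
      rcases le_total a' t with ha | ha
      · refine le_max_of_le_right ?_
        rw [abs_of_nonpos (by linarith)]
        linarith
      · refine le_max_of_le_left ?_
        rw [abs_of_nonneg (by linarith)]
        linarith

variable (F : Finset I)
  (rlo rhi : (i : I) → (lp (fun _ : {j : I // j ≠ i} => ℝ) ⊤ → ℝ))

/-- The value of the one-step clamping map at coordinate `i`. -/
noncomputable def TVal (x : lp (fun _ : I => ℝ) ⊤) (i : I) : ℝ :=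
  if i ∈ F then clamp (rlo i (dropCoord i x)) (rhi i (dropCoord i x)) (x i) else x i

lemma TVal_memℓp (x : lp (fun _ : I => ℝ) ⊤) :
    Memℓp (TVal F rlo rhi x) ⊤ := by
  refine memℓp_infty ⟨‖x‖ + ∑ j ∈ F, (|rlo j (dropCoord j x)| + |rhi j (dropCoord j x)|), ?_⟩
  rintro s ⟨i, rfl⟩
  have hsum : (0:ℝ) ≤ ∑ j ∈ F, (|rlo j (dropCoord j x)| + |rhi j (dropCoord j x)|) :=
    Finset.sum_nonneg fun j _ => by positivity
  have hxi : |x i| ≤ ‖x‖ := by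
    have := lp.norm_apply_le_norm ENNReal.top_ne_zero x i
    rwa [Real.norm_eq_abs] at this
  simp only [TVal, Real.norm_eq_abs]
  split_ifs with hi
  · have h1 := abs_clamp_le (rlo i (dropCoord i x)) (rhi i (dropCoord i x)) (x i)
    have h2 : |rlo i (dropCoord i x)| + |rhi i (dropCoord i x)|
        ≤ ∑ j ∈ F, (|rlo j (dropCoord j x)| + |rhi j (dropCoord j x)|) :=
      Finset.single_le_sum (f := fun j => |rlo j (dropCoord j x)| + |rhi j (dropCoord j x)|)
        (fun j _ => by positivity) hi
    linarith
  · linarith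

/-- The one-step clamping map. -/
noncomputable def T (x : lp (fun _ : I => ℝ) ⊤) : lp (fun _ : I => ℝ) ⊤ :=
  ⟨TVal F rlo rhi x, TVal_memℓp F rlo rhi x⟩

lemma T_apply (x : lp (fun _ : I => ℝ) ⊤) (i : I) :
    (T F rlo rhi x) i = if i ∈ F then
      clamp (rlo i (dropCoord i x)) (rhi i (dropCoord i x)) (x i) else x i := rfl

end RetractAux

open RetractAux in
/-- If `F ⊆ I` is finite, `0 ≤ λ < 1`, and for `i ∈ F` the bounds
`r̲_i, r̄_i : l_∞(I \ {i}) → ℝ` are `λ`-Lipschitz with `r̲_i ≤ r̄_i`, then the set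
`Q = {x : r̲_i(π̂_i x) ≤ x_i ≤ r̄_i(π̂_i x) for all i ∈ F}` is non-empty and there is a
`1`-Lipschitz retraction of `l_∞(I)` onto `Q`. -/
theorem nonempty_and_retraction_of_contracting_bounds {I : Type u}
    (F : Finset I) (lam : NNReal) (hlam : lam < 1)
    (rlo rhi : (i : I) → (lp (fun _ : {j : I // j ≠ i} => ℝ) ⊤ → ℝ))
    (hlo : ∀ i ∈ F, LipschitzWith lam (rlo i))
    (hhi : ∀ i ∈ F, LipschitzWith lam (rhi i))
    (hle : ∀ i ∈ F, ∀ y, rlo i y ≤ rhi i y)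
    (Q : Set (lp (fun _ : I => ℝ) ⊤))
    (hQdef : Q = {x | ∀ i ∈ F,
      rlo i (dropCoord i x) ≤ x i ∧ x i ≤ rhi i (dropCoord i x)}) :
    Q.Nonempty ∧
      ∃ ρ : lp (fun _ : I => ℝ) ⊤ → lp (fun _ : I => ℝ) ⊤,
        LipschitzWith 1 ρ ∧ Set.range ρ ⊆ Q ∧ ∀ q ∈ Q, ρ q = q := by
  classical
  set T := RetractAux.T F rlo rhi with hT
  have hlam1 : (lam : ℝ) ≤ 1 := le_of_lt (by exact_mod_cast hlam)
  have hlam0 : (0:ℝ) ≤ (lam : ℝ) := lam.coe_nonneg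
  -- λ-Lipschitz bounds on the interval endpoints
  have hlodist : ∀ i ∈ F, ∀ x y : lp (fun _ : I => ℝ) ⊤,
      |rlo i (dropCoord i x) - rlo i (dropCoord i y)| ≤ (lam : ℝ) * dist x y := by
    intro i hi x y
    have := (hlo i hi).dist_le_mul (dropCoord i x) (dropCoord i y)
    calc |rlo i (dropCoord i x) - rlo i (dropCoord i y)|
        = dist (rlo i (dropCoord i x)) (rlo i (dropCoord i y)) := (Real.dist_eq _ _).symm
      _ ≤ (lam : ℝ) * dist (dropCoord i x) (dropCoord i y) := this
      _ ≤ (lam : ℝ) * dist x y := by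
          exact mul_le_mul_of_nonneg_left (dropCoord_dist_le i x y) hlam0
  have hhidist : ∀ i ∈ F, ∀ x y : lp (fun _ : I => ℝ) ⊤,
      |rhi i (dropCoord i x) - rhi i (dropCoord i y)| ≤ (lam : ℝ) * dist x y := by
    intro i hi x y
    have := (hhi i hi).dist_le_mul (dropCoord i x) (dropCoord i y)
    calc |rhi i (dropCoord i x) - rhi i (dropCoord i y)|
        = dist (rhi i (dropCoord i x)) (rhi i (dropCoord i y)) := (Real.dist_eq _ _).symm
      _ ≤ (lam : ℝ) * dist (dropCoord i x) (dropCoord i y) := this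
      _ ≤ (lam : ℝ) * dist x y := by
          exact mul_le_mul_of_nonneg_left (dropCoord_dist_le i x y) hlam0
  -- T is 1-Lipschitz
  have hT1 : ∀ x y : lp (fun _ : I => ℝ) ⊤, dist (T x) (T y) ≤ dist x y := by
    intro x y
    rw [dist_eq_norm]
    refine lp.norm_le_of_forall_le dist_nonneg fun i => ?_
    have hcoe : ((T x - T y : lp (fun _ : I => ℝ) ⊤)) i = T x i - T y i := by rw [lp.coeFn_sub]; rfl
    rw [hcoe, Real.norm_eq_abs, hT, T_apply, T_apply]
    split_ifs with hi
    · refine (clamp_lipschitz _ _ _ _ _ _).trans (max_le ?_ (max_le ?_ ?_))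
      · exact (hlodist i hi x y).trans (by nlinarith [dist_nonneg (x := x) (y := y)])
      · exact coord_dist_le x y i
      · exact (hhidist i hi x y).trans (by nlinarith [dist_nonneg (x := x) (y := y)])
    · exact coord_dist_le x y i
  -- key contraction estimate
  have hTcontr : ∀ x : lp (fun _ : I => ℝ) ⊤, dist (T (T x)) (T x) ≤ (lam : ℝ) * dist (T x) x := by
    intro x
    rw [dist_eq_norm]
    refine lp.norm_le_of_forall_le (by positivity) fun i => ?_
    have hcoe : ((T (T x) - T x : lp (fun _ : I => ℝ) ⊤)) i = T (T x) i - T x i := by rw [lp.coeFn_sub]; rfl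
    rw [hcoe, Real.norm_eq_abs, hT, T_apply]
    split_ifs with hi
    · -- T x i is in the interval for x, apply clamp_dist_of_mem
      have hmem1 : rlo i (dropCoord i x) ≤ T x i := by
        rw [hT, T_apply, if_pos hi]; exact le_clamp _ _ _
      have hmem2 : T x i ≤ rhi i (dropCoord i x) := by
        rw [hT, T_apply, if_pos hi]
        exact clamp_le _ _ _ (hle i hi _)
      refine (clamp_dist_of_mem _ _ hmem1 hmem2).trans (max_le ?_ ?_)
      · exact hlodist i hi (T x) x
      · exact hhidist i hi (T x) x
    · rw [sub_self, abs_zero]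
      positivity
  -- iterates
  set u : lp (fun _ : I => ℝ) ⊤ → ℕ → lp (fun _ : I => ℝ) ⊤ := fun x n => T^[n] x with hu
  have hustep : ∀ x n, u x (n+1) = T (u x n) := by
    intro x n
    rw [hu]
    simp [Function.iterate_succ_apply']
  have hud : ∀ x : lp (fun _ : I => ℝ) ⊤, ∀ n, dist (u x (n+1)) (u x n) ≤ (lam : ℝ) ^ n * dist (T x) x := by
    intro x n
    induction n with
    | zero =>
        rw [hustep x 0]
        simp [hu]
    | succ n ih =>
        rw [hustep x (n+1)]
        calc dist (T (u x (n+1))) (u x (n+1))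
            = dist (T (T (u x n))) (T (u x n)) := by rw [hustep x n]
          _ ≤ (lam : ℝ) * dist (T (u x n)) (u x n) := hTcontr _
          _ = (lam : ℝ) * dist (u x (n+1)) (u x n) := by rw [hustep x n]
          _ ≤ (lam : ℝ) * ((lam : ℝ) ^ n * dist (T x) x) :=
              mul_le_mul_of_nonneg_left ih hlam0
          _ = (lam : ℝ) ^ (n+1) * dist (T x) x := by ring
  have hcauchy : ∀ x : lp (fun _ : I => ℝ) ⊤, CauchySeq (u x) := by
    intro x
    refine cauchySeq_of_le_geometric (lam : ℝ) (dist (T x) x) (by exact_mod_cast hlam)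
      fun n => ?_
    rw [dist_comm]
    calc dist (u x (n+1)) (u x n) ≤ (lam : ℝ) ^ n * dist (T x) x := hud x n
      _ = dist (T x) x * (lam : ℝ) ^ n := by ring
  have hconv : ∀ x : lp (fun _ : I => ℝ) ⊤, ∃ y : lp (fun _ : I => ℝ) ⊤, Filter.Tendsto (u x) Filter.atTop (nhds y) :=
    fun x => cauchySeq_tendsto_of_complete (hcauchy x)
  set ρ : lp (fun _ : I => ℝ) ⊤ → lp (fun _ : I => ℝ) ⊤ := fun x => (hconv x).choose with hρ
  have hρlim : ∀ x : lp (fun _ : I => ℝ) ⊤, Filter.Tendsto (u x) Filter.atTop (nhds (ρ x)) :=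
    fun x => (hconv x).choose_spec
  -- ρ x is a fixed point of T
  have hTfix : ∀ x : lp (fun _ : I => ℝ) ⊤, T (ρ x) = ρ x := by
    intro x
    have hTcont : Continuous T := by
      rw [Metric.continuous_iff]
      intro b ε hε
      exact ⟨ε, hε, fun a ha => lt_of_le_of_lt (hT1 a b) ha⟩
    have h1 : Filter.Tendsto (fun n => T (u x n)) Filter.atTop (nhds (T (ρ x))) :=
      (hTcont.tendsto _).comp (hρlim x)
    have h2 : Filter.Tendsto (fun n => T (u x n)) Filter.atTop (nhds (ρ x)) := by
      have := (hρlim x).comp (Filter.tendsto_add_atTop_nat 1)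
      refine Filter.Tendsto.congr (fun n => ?_) this
      simp [Function.comp, hustep x n]
    exact tendsto_nhds_unique h1 h2
  -- fixed points of T lie in Q
  have hfixQ : ∀ x : lp (fun _ : I => ℝ) ⊤, T x = x → x ∈ Q := by
    intro x hx
    rw [hQdef]
    intro i hi
    have hxi : x i = clamp (rlo i (dropCoord i x)) (rhi i (dropCoord i x)) (x i) := by
      conv_lhs => rw [← hx]
      rw [hT, T_apply, if_pos hi]
    constructor
    · rw [hxi]; exact le_clamp _ _ _
    · rw [hxi]; exact clamp_le _ _ _ (hle i hi _)
  -- points of Q are fixed by T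
  have hQfix : ∀ q ∈ Q, T q = q := by
    intro q hq
    rw [hQdef] at hq
    apply lp.ext
    funext i
    rw [hT, T_apply]
    split_ifs with hi
    · exact clamp_eq_of_mem (hq i hi).1 (hq i hi).2
    · rfl
  have hρQ : ∀ x : lp (fun _ : I => ℝ) ⊤, ρ x ∈ Q := fun x => hfixQ (ρ x) (hTfix x)
  have hρfix : ∀ q ∈ Q, ρ q = q := by
    intro q hq
    have hiter : ∀ n, u q n = q := by
      intro n
      induction n with
      | zero => rfl
      | succ n ih => rw [hustep q n, ih, hQfix q hq]
    have : Filter.Tendsto (u q) Filter.atTop (nhds q) := by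
      simp only [funext hiter]
      exact tendsto_const_nhds
    exact tendsto_nhds_unique (hρlim q) this
  refine ⟨⟨ρ 0, hρQ 0⟩, ρ, ?_, ?_, hρfix⟩
  · -- ρ is 1-Lipschitz
    refine LipschitzWith.of_dist_le_mul fun x y => ?_
    rw [NNReal.coe_one, one_mul]
    have hn : ∀ n, dist (u x n) (u y n) ≤ dist x y := by
      intro n
      induction n with
      | zero => exact le_rfl
      | succ n ih =>
          rw [hustep x n, hustep y n]
          exact (hT1 _ _).trans ih
    have htend : Filter.Tendsto (fun n => dist (u x n) (u y n)) Filter.atTop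
        (nhds (dist (ρ x) (ρ y))) := (hρlim x).dist (hρlim y)
    exact le_of_tendsto htend (Filter.Eventually.of_forall hn)
  · rintro _ ⟨x, rfl⟩
    exact hρQ x
end

section
/- Let I be a set and let Q ⊆ l_∞(I) be a non-empty subset which is injective as a metric space with the induced metric. Then for every x ∈ l_∞(I) ∖ Q there exist ε > 0 and p ∈ Q such that ‖x − p‖ + ‖x − q‖ ≥ ‖p − q‖ + ε for all q ∈ Q. -/
universe u v w

/-- If `Q ⊆ l_∞(I)` is non-empty and injective with the induced metric, then for every
`x ∉ Q` there are `ε > 0` and `p ∈ Q` such that `‖x - p‖ + ‖x - q‖ ≥ ‖p - q‖ + ε` for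
all `q ∈ Q`. -/
theorem exists_eps_of_injective_subset {I : Type u}
    (Q : Set (lp (fun _ : I => ℝ) ⊤)) (hQ : Q.Nonempty)
    (hinj : IsInjectiveMetricSpace.{u, u, u} Q)
    (x : lp (fun _ : I => ℝ) ⊤) (hx : x ∉ Q) :
    ∃ ε > (0 : ℝ), ∃ p ∈ Q, ∀ q ∈ Q, ‖p - q‖ + ε ≤ ‖x - p‖ + ‖x - q‖ := by
  obtain ⟨g, hg, hgi⟩ := hinj (Subtype.val : Q → lp (fun _ : I => ℝ) ⊤)
    isometry_subtype_coe (id : Q → Q) (LipschitzWith.id)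
  refine ⟨‖x - (g x : lp (fun _ : I => ℝ) ⊤)‖, norm_pos_iff.mpr (sub_ne_zero.mpr
    (fun h => hx (h ▸ (g x).2))), (g x : lp (fun _ : I => ℝ) ⊤), (g x).2,
    fun q hq => ?_⟩
  have h2 : dist (g x) (g (⟨q, hq⟩ : Q)) ≤ 1 * dist x q := hg.dist_le_mul x (⟨q, hq⟩ : Q)
  rw [hgi (⟨q, hq⟩ : Q), Subtype.dist_eq, one_mul, dist_eq_norm, dist_eq_norm] at h2
  have h3 : ‖(g x : lp (fun _ : I => ℝ) ⊤) - q‖ ≤ ‖x - q‖ := h2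
  linarith
end

section
/- Let I be a set and let V be a linear subspace of l_∞(I) of codimension one. If V is injective as a metric space with the induced metric, then there exists i ∈ I such that V ∩ ( Int(C_i) ∪ Int(−C_i) ) = ∅, where Int(C_i) = { x ∈ l_∞(I) : x_i > sup_{j∈I∖{i}} |x_j| } and Int(−C_i) = { x ∈ l_∞(I) : −x_i > sup_{j∈I∖{i}} |x_j| }. -/
universe u v w

/-!
Suppose `V` meets the open cone `Int(C_i) ∪ Int(-C_i)` for every `i`, and let `r` be a
`1`-Lipschitz retraction of `l_∞(I)` onto `V`, which exists because `V` is injective.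
For a sign vector `e` and a vector `v ∈ V` with `v i = 1` and `|v j| ≤ s < 1` for `j ≠ i`,
the point `t e_i v ∈ V` is within `t - 1` of `e` once `t (1 - s) ≥ 2`, so `r e` is too, and
this forces `e_i (r e)_i ≥ 1`. Applied to `e` and `-e`, which are at distance `2`, this
gives `r e - r (-e) = 2 e`, so every sign vector lies in `V`. Hence `V` contains all
indicator vectors, whose span is dense; since `V` is closed (it is the fixed-point set of
`r`), `V = l_∞(I)`, contradicting codimension one.
-/

open scoped lp ENNReal

theorem IsInjectiveMetricSpace.exists_lipschitzWith_retraction {X : Type u} [MetricSpace X]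
    (hX : IsInjectiveMetricSpace.{u, u, w} X) {Y : Type w} [MetricSpace Y] {ι : X → Y}
    (hι : Isometry ι) : ∃ r : Y → X, LipschitzWith 1 r ∧ ∀ x, r (ι x) = x :=
  hX ι hι id LipschitzWith.id

theorem isClosed_of_retraction {X : Type*} [TopologicalSpace X] [T2Space X] {s : Set X}
    {r : X → X} (hr : Continuous r) (hrs : ∀ x, r x ∈ s) (hfix : ∀ x ∈ s, r x = x) :
    IsClosed s := by
  have : s = {x | r x = x} := Set.ext fun x => ⟨hfix x, fun hx => hx ▸ hrs x⟩
  exact this ▸ isClosed_eq hr continuous_id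

namespace lp

variable {I : Type*}

def IsSignVector (e : ℓ^∞(I, ℝ)) : Prop := ∀ i, |e i| = 1

theorem isSignVector_one : IsSignVector (1 : ℓ^∞(I, ℝ)) := fun i => by
  simp [infty_coeFn_one]

theorem IsSignVector.neg {e : ℓ^∞(I, ℝ)} (he : IsSignVector e) : IsSignVector (-e) := fun i => by
  simpa using he i

theorem IsSignVector.mul_self_apply {e : ℓ^∞(I, ℝ)} (he : IsSignVector e) (i : I) :
    e i * e i = 1 := by
  rw [← abs_mul_self, abs_mul, he i, one_mul]

theorem abs_apply_le_norm (x : ℓ^∞(I, ℝ)) (i : I) : |x i| ≤ ‖x‖ := by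
  simpa using norm_apply_le_norm ENNReal.top_ne_zero x i

noncomputable def indicatorVec (A : Set I) : ℓ^∞(I, ℝ) :=
  ⟨A.indicator 1, memℓp_infty ⟨1, by
    rintro _ ⟨i, rfl⟩
    by_cases h : i ∈ A <;> simp [h]⟩⟩

theorem indicatorVec_apply (A : Set I) (i : I) : indicatorVec A i = A.indicator 1 i := rfl

theorem isSignVector_two_smul_indicatorVec_sub_one (A : Set I) :
    IsSignVector ((2 : ℝ) • indicatorVec A - 1) := fun i => by
  rw [coeFn_sub, coeFn_smul, infty_coeFn_one, Pi.sub_apply, Pi.smul_apply, indicatorVec_apply]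
  by_cases h : i ∈ A <;> norm_num [h]

theorem indicatorVec_mem_of_forall_isSignVector {V : Submodule ℝ ℓ^∞(I, ℝ)}
    (hV : ∀ e, IsSignVector e → e ∈ V) (A : Set I) : indicatorVec A ∈ V := by
  have h := V.smul_mem (2⁻¹ : ℝ) (V.add_mem
    (hV _ (isSignVector_two_smul_indicatorVec_sub_one A)) (hV 1 isSignVector_one))
  rwa [sub_add_cancel, smul_smul, inv_mul_cancel₀ two_ne_zero, one_smul] at h

theorem floor_div_mem_Icc (x : ℓ^∞(I, ℝ)) {δ : ℝ} (hδ : 0 < δ) (i : I) :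
    ⌊x i / δ⌋ ∈ Finset.Icc ⌊-‖x‖ / δ⌋ ⌊‖x‖ / δ⌋ := by
  rw [Finset.mem_Icc]
  constructor <;> apply Int.floor_le_floor <;> apply div_le_div_of_nonneg_right _ hδ.le <;>
    linarith [abs_le.1 (abs_apply_le_norm x i)]

theorem sum_smul_indicatorVec_floor_apply (x : ℓ^∞(I, ℝ)) {δ : ℝ} (hδ : 0 < δ) (i : I) :
    (∑ k ∈ Finset.Icc ⌊-‖x‖ / δ⌋ ⌊‖x‖ / δ⌋,
      (δ * k) • indicatorVec {j | ⌊x j / δ⌋ = k}) i = ⌊x i / δ⌋ * δ := by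
  simp only [coeFn_sum, Finset.sum_apply, coeFn_smul, Pi.smul_apply, indicatorVec_apply,
    Set.indicator_apply, Set.mem_ofPred_eq, Pi.one_apply, smul_eq_mul, mul_ite, mul_one, mul_zero]
  rw [Finset.sum_ite_eq, if_pos (floor_div_mem_Icc x hδ i), mul_comm]

theorem dense_span_range_indicatorVec :
    Dense (Submodule.span ℝ (Set.range (indicatorVec (I := I))) : Set ℓ^∞(I, ℝ)) := by
  refine Metric.dense_iff.2 fun x ε hε => ⟨∑ k ∈ Finset.Icc ⌊-‖x‖ / (ε / 2)⌋ ⌊‖x‖ / (ε / 2)⌋,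
    (ε / 2 * k) • indicatorVec {j | ⌊x j / (ε / 2)⌋ = k}, ?_, Submodule.sum_mem _ fun k _ =>
    Submodule.smul_mem _ _ (Submodule.subset_span ⟨_, rfl⟩)⟩
  rw [Metric.mem_ball, dist_comm, dist_eq_norm]
  refine (norm_le_of_forall_le (by positivity) fun i => ?_).trans_lt (half_lt_self hε)
  rw [coeFn_sub, Pi.sub_apply, sum_smul_indicatorVec_floor_apply x (half_pos hε), Real.norm_eq_abs,
    abs_le]
  constructor <;> linarith [Int.sub_floor_div_mul_nonneg (x i) (half_pos hε),
    Int.sub_floor_div_mul_lt (x i) (half_pos hε)]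

section Retraction

variable {V : Submodule ℝ ℓ^∞(I, ℝ)} {r : ℓ^∞(I, ℝ) → ℓ^∞(I, ℝ)}

theorem exists_mem_apply_eq_one_of_iSup_lt {x : ℓ^∞(I, ℝ)} (hxV : x ∈ V) {i : I}
    (hx : (⨆ j : {j : I // j ≠ i}, |x j|) < |x i|) :
    ∃ v ∈ V, v i = 1 ∧ ∃ s, 0 ≤ s ∧ s < 1 ∧ ∀ j ≠ i, |v j| ≤ s := by
  set S := ⨆ j : {j : I // j ≠ i}, |x j|
  have hS : 0 ≤ S := Real.iSup_nonneg fun _ => abs_nonneg _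
  have hxi : 0 < |x i| := hS.trans_lt hx
  have hbdd : BddAbove (Set.range fun j : {j : I // j ≠ i} => |x j|) := ⟨‖x‖, by
    rintro _ ⟨j, rfl⟩
    exact abs_apply_le_norm x j⟩
  refine ⟨(x i)⁻¹ • x, V.smul_mem _ hxV, inv_mul_cancel₀ (abs_pos.1 hxi), S / |x i|,
    div_nonneg hS hxi.le, (div_lt_one hxi).2 hx, fun j hj => ?_⟩
  rw [coeFn_smul, Pi.smul_apply, smul_eq_mul, abs_mul, abs_inv, inv_mul_eq_div]
  exact div_le_div_of_nonneg_right (le_ciSup hbdd ⟨j, hj⟩) hxi.le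

theorem IsSignVector.norm_sub_smul_le {e v : ℓ^∞(I, ℝ)} (he : IsSignVector e) {i : I} (hvi : v i = 1)
    {s t : ℝ} (hv : ∀ j ≠ i, |v j| ≤ s) (ht : 1 ≤ t) (hts : 2 ≤ t * (1 - s)) :
    ‖e - (t * e i) • v‖ ≤ t - 1 := by
  refine norm_le_of_forall_le (by linarith) fun j => ?_
  rw [coeFn_sub, coeFn_smul, Pi.sub_apply, Pi.smul_apply, smul_eq_mul, Real.norm_eq_abs]
  by_cases hj : j = i
  · subst hj
    rw [hvi, mul_one, ← one_sub_mul, abs_mul, he j, mul_one, abs_of_nonpos (by linarith)]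
    linarith
  · calc |e j - t * e i * v j| ≤ |e j| + |t * e i * v j| := abs_sub _ _
      _ = 1 + t * |v j| := by
        rw [he j, abs_mul, abs_mul, he i, mul_one, abs_of_nonneg (by linarith : (0 : ℝ) ≤ t)]
      _ ≤ 1 + t * s := by gcongr; exact hv j hj
      _ ≤ t - 1 := by linarith

theorem one_le_mul_apply_of_isSignVector (hr : LipschitzWith 1 r) (hfix : ∀ v ∈ V, r v = v)
    {v : ℓ^∞(I, ℝ)} (hvV : v ∈ V) {i : I} (hvi : v i = 1) {s : ℝ} (hs0 : 0 ≤ s) (hs1 : s < 1)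
    (hv : ∀ j ≠ i, |v j| ≤ s) {e : ℓ^∞(I, ℝ)} (he : IsSignVector e) : 1 ≤ e i * r e i := by
  set t := 2 / (1 - s)
  have hts : t * (1 - s) = 2 := div_mul_cancel₀ _ (by linarith)
  have ht : 2 ≤ t := by rw [le_div_iff₀ (by linarith)]; linarith
  have hw : (t * e i) • v ∈ V := V.smul_mem _ hvV
  have hcoord : |r e i - t * e i| ≤ t - 1 := calc
    |r e i - t * e i| = |(r e - (t * e i) • v) i| := by
      rw [coeFn_sub, coeFn_smul, Pi.sub_apply, Pi.smul_apply, smul_eq_mul, hvi, mul_one]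
    _ ≤ ‖r e - (t * e i) • v‖ := abs_apply_le_norm _ i
    _ ≤ ‖e - (t * e i) • v‖ := by
      simpa [dist_eq_norm, hfix _ hw] using hr.dist_le_mul e ((t * e i) • v)
    _ ≤ t - 1 := he.norm_sub_smul_le hvi hv (by linarith) hts.ge
  have hsplit : e i * r e i = t - e i * (t * e i - r e i) := by
    linear_combination t * he.mul_self_apply i
  have hbound : e i * (t * e i - r e i) ≤ t - 1 := calc
    e i * (t * e i - r e i) ≤ |e i * (t * e i - r e i)| := le_abs_self _
    _ = |r e i - t * e i| := by rw [abs_mul, he i, one_mul, abs_sub_comm]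
    _ ≤ t - 1 := hcoord
  linarith

theorem mem_of_isSignVector (hr : LipschitzWith 1 r) (hrV : ∀ x, r x ∈ V)
    (hkey : ∀ e, IsSignVector e → ∀ i, 1 ≤ e i * r e i) {e : ℓ^∞(I, ℝ)} (he : IsSignVector e) :
    e ∈ V := by
  have hdist : ‖r e - r (-e)‖ ≤ 2 := calc
    ‖r e - r (-e)‖ ≤ ‖e - -e‖ := by simpa [dist_eq_norm] using hr.dist_le_mul e (-e)
    _ = ‖(2 : ℝ) • e‖ := by congr 1; module
    _ ≤ 2 := norm_le_of_forall_le zero_le_two fun j => by simp [he j]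
  have hdiff : r e - r (-e) = (2 : ℝ) • e := by
    ext j
    have hj : |r e j - r (-e) j| ≤ 2 := by
      simpa using (abs_apply_le_norm _ j).trans hdist
    have hle : e j * (r e j - r (-e) j) ≤ 2 := calc
      e j * (r e j - r (-e) j) ≤ |e j * (r e j - r (-e) j)| := le_abs_self _
      _ = |r e j - r (-e) j| := by rw [abs_mul, he j, one_mul]
      _ ≤ 2 := hj
    have h1 := hkey e he j
    have h2 := hkey (-e) he.neg j
    rw [coeFn_neg, Pi.neg_apply] at h2
    have heq : e j * (r e j - r (-e) j) = 2 := by linarith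
    rw [coeFn_sub, Pi.sub_apply, coeFn_smul, Pi.smul_apply, smul_eq_mul]
    linear_combination e j * heq - (r e j - r (-e) j) * he.mul_self_apply j
  have h := V.smul_mem (2⁻¹ : ℝ) (V.sub_mem (hrV e) (hrV (-e)))
  rwa [hdiff, smul_smul, inv_mul_cancel₀ two_ne_zero, one_smul] at h

theorem eq_top_of_lipschitzWith_retraction (hr : LipschitzWith 1 r) (hrV : ∀ x, r x ∈ V)
    (hfix : ∀ v ∈ V, r v = v) (hcone : ∀ i, ∃ x ∈ V, (⨆ j : {j : I // j ≠ i}, |x j|) < |x i|) :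
    V = ⊤ := by
  have hsign : ∀ e, IsSignVector e → e ∈ V := fun e he => by
    refine mem_of_isSignVector hr hrV (fun e he i => ?_) he
    obtain ⟨x, hxV, hx⟩ := hcone i
    obtain ⟨v, hvV, hvi, s, hs0, hs1, hv⟩ := exists_mem_apply_eq_one_of_iSup_lt hxV hx
    exact one_le_mul_apply_of_isSignVector hr hfix hvV hvi hs0 hs1 hv he
  have hspan : Submodule.span ℝ (Set.range indicatorVec) ≤ V :=
    Submodule.span_le.2 (Set.range_subset_iff.2 (indicatorVec_mem_of_forall_isSignVector hsign))
  have hclosed : IsClosed (V : Set ℓ^∞(I, ℝ)) := isClosed_of_retraction hr.continuous hrV hfix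
  exact Submodule.eq_top_iff'.2 fun x =>
    dense_span_range_indicatorVec.induction (fun y hy => hspan hy) hclosed x

end Retraction

end lp

/-- If a codimension-one linear subspace `V` of `l_∞(I)` is injective with the induced
metric, then there is a coordinate `i ∈ I` such that `V` avoids the interiors of the
cones `C_i` and `-C_i`, where
`Int(C_i) = {x : x_i > sup_{j ≠ i} |x_j|}` and `Int(-C_i) = {x : -x_i > sup_{j ≠ i} |x_j|}`. -/
theorem exists_coord_of_injective_codim_one {I : Type u}
    (V : Submodule ℝ (lp (fun _ : I => ℝ) ⊤))
    (hcodim : Module.finrank ℝ ((lp (fun _ : I => ℝ) ⊤) ⧸ V) = 1)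
    (hinj : IsInjectiveMetricSpace.{u, u, u} V) :
    ∃ i : I, (V : Set (lp (fun _ : I => ℝ) ⊤)) ∩
      ({x | (⨆ j : {j : I // j ≠ i}, |x j.1|) < x i} ∪
        {x | (⨆ j : {j : I // j ≠ i}, |x j.1|) < -x i}) = ∅ := by
  by_contra hcon
  have hcone : ∀ i, ∃ x ∈ V, (⨆ j : {j : I // j ≠ i}, |x j.1|) < |x i| := fun i => by
    obtain ⟨x, hxV, hx⟩ := Set.nonempty_iff_ne_empty.2 (not_exists.1 hcon i)
    exact ⟨x, hxV, lt_abs.2 hx⟩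
  obtain ⟨g, hg, hgV⟩ := hinj.exists_lipschitzWith_retraction isometry_subtype_coe
  have hV : V = ⊤ := lp.eq_top_of_lipschitzWith_retraction (r := Subtype.val ∘ g)
    (LipschitzWith.of_dist_le_mul fun x y => hg.dist_le_mul x y) (fun x => (g x).2)
    (fun v hv => congrArg Subtype.val (hgV ⟨v, hv⟩)) hcone
  subst hV
  rw [Module.finrank_zero_of_subsingleton] at hcodim
  exact zero_ne_one hcodim
end

section
/- Let Λ : l_∞(ℕ) → ℝ be a linear functional which is a Banach limit, i.e.: (1) Λ(x) ≥ 0 whenever x_n ≥ 0 for all n; (2) Λ ∘ S = Λ, where S : l_∞(ℕ) → l_∞(ℕ) is the left-shift operator with (Sx)_n = x_{n+1}; (3) Λ(x) = lim_{n→∞} x_n for every convergent sequence x. Then the kernel V := ker(Λ) ⊆ l_∞(ℕ) is not injective as a metric space with the induced metric. -/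
universe u v w

/-- The left-shift operator on `l_∞(ℕ)`. -/
noncomputable def leftShift (x : lp (fun _ : ℕ => ℝ) ⊤) : lp (fun _ : ℕ => ℝ) ⊤ :=
  ⟨fun n => x (n + 1), memℓp_infty ⟨‖x‖, by
    rintro s ⟨n, rfl⟩
    exact lp.norm_apply_le_norm ENNReal.top_ne_zero x (n + 1)⟩⟩

/-- The constant-one sequence in `l_∞`. -/
noncomputable def constOne : lp (fun _ : ℕ => ℝ) ⊤ :=
  ⟨fun _ => (1 : ℝ), memℓp_infty ⟨1, by rintro s ⟨n, rfl⟩; simp⟩⟩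

lemma constOne_apply (n : ℕ) : constOne n = 1 := rfl

/-- The sequence which is `2` on `n < k` and `0` afterwards. -/
noncomputable def twoUpTo (k : ℕ) : lp (fun _ : ℕ => ℝ) ⊤ :=
  ⟨fun n => if n < k then (2 : ℝ) else 0, memℓp_infty ⟨2, by
    rintro s ⟨n, rfl⟩
    by_cases h : n < k <;> simp [h]⟩⟩

lemma twoUpTo_apply (k n : ℕ) : twoUpTo k n = if n < k then (2 : ℝ) else 0 := rfl

/-- The kernel of a Banach limit `Λ : l_∞(ℕ) → ℝ` (a linear functional which is
non-negative on non-negative sequences, shift-invariant, and extends the limit of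
convergent sequences) is not injective with the induced metric. -/
theorem banach_limit_kernel_not_injective
    (Λ : lp (fun _ : ℕ => ℝ) ⊤ →ₗ[ℝ] ℝ)
    (h1 : ∀ x : lp (fun _ : ℕ => ℝ) ⊤, (∀ n, 0 ≤ x n) → 0 ≤ Λ x)
    (h2 : ∀ x : lp (fun _ : ℕ => ℝ) ⊤, Λ (leftShift x) = Λ x)
    (h3 : ∀ (x : lp (fun _ : ℕ => ℝ) ⊤) (l : ℝ),
      Filter.Tendsto (fun n => x n) Filter.atTop (nhds l) → Λ x = l) :
    ¬ IsInjectiveMetricSpace.{0, v, w} (LinearMap.ker Λ) := by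
  intro hI
  set V := LinearMap.ker Λ with hV
  -- Λ of the constant one sequence is 1
  have hΛone : Λ constOne = 1 := h3 _ 1 (by
    simp only [constOne_apply]
    exact tendsto_const_nhds)
  -- Λ of twoUpTo k is 0, so they lie in V
  have hmem : ∀ k, twoUpTo k ∈ V := by
    intro k
    have h0 : Λ (twoUpTo k) = 0 := by
      apply h3 _ 0
      apply Filter.Tendsto.congr' _ tendsto_const_nhds
      filter_upwards [Filter.eventually_ge_atTop k] with n hn
      rw [twoUpTo_apply, if_neg (by omega)]
    exact LinearMap.mem_ker.mpr h0
  -- apply injectivity with A = ULift V, B = ULift (lp ...)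
  have hval : Isometry
      (fun a : ULift.{v} V => (ULift.up a.down.val : ULift.{w} (lp (fun _ : ℕ => ℝ) ⊤))) :=
    Isometry.of_dist_eq fun a b => rfl
  have hf : LipschitzWith 1 (fun a : ULift.{v} V => a.down) := by
    apply Isometry.lipschitz
    intro a b; rfl
  obtain ⟨g, hg, hgι⟩ := hI
    (fun a : ULift.{v} V => (ULift.up a.down.val : ULift.{w} (lp (fun _ : ℕ => ℝ) ⊤)))
    hval (fun a => a.down) hf
  set w : V := g (ULift.up constOne) with hw
  -- g fixes points of V
  have hfix : ∀ v : V, g (ULift.up (v : lp (fun _ : ℕ => ℝ) ⊤)) = v := fun v => hgι (ULift.up v)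
  -- hence dist (w : E) v ≤ dist constOne v for all v in V
  have hdist : ∀ v : V, ‖(w : lp (fun _ : ℕ => ℝ) ⊤) - (v : lp (fun _ : ℕ => ℝ) ⊤)‖
      ≤ ‖constOne - (v : lp (fun _ : ℕ => ℝ) ⊤)‖ := by
    intro v
    have this := hg.dist_le_mul (ULift.up constOne) (ULift.up (v : lp (fun _ : ℕ => ℝ) ⊤))
    rw [hfix v, ← hw] at this
    have e1 : dist w v = ‖(w : lp (fun _ : ℕ => ℝ) ⊤) - (v : lp (fun _ : ℕ => ℝ) ⊤)‖ := by
      rw [Subtype.dist_eq, dist_eq_norm]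
    have e2 : dist (ULift.up constOne : ULift.{w} (lp (fun _ : ℕ => ℝ) ⊤))
        (ULift.up (v : lp (fun _ : ℕ => ℝ) ⊤)) = ‖constOne - (v : lp (fun _ : ℕ => ℝ) ⊤)‖ := by
      rw [show dist (ULift.up constOne : ULift.{w} (lp (fun _ : ℕ => ℝ) ⊤))
        (ULift.up (v : lp (fun _ : ℕ => ℝ) ⊤)) = dist constOne (v : lp (fun _ : ℕ => ℝ) ⊤)
        from rfl, dist_eq_norm]
    rw [e1, e2, NNReal.coe_one, one_mul] at this
    exact this
  -- each coordinate of w is ≥ 1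
  have hcoord : ∀ n, (1 : ℝ) ≤ (w : lp (fun _ : ℕ => ℝ) ⊤) n := by
    intro n
    have h1' : ‖constOne - twoUpTo (n + 1)‖ ≤ 1 := by
      refine lp.norm_le_of_forall_le zero_le_one fun i => ?_
      rw [lp.coeFn_sub]
      simp only [Pi.sub_apply, constOne_apply, twoUpTo_apply]
      by_cases h : i < n + 1 <;> simp [h] <;> norm_num
    have h2' : ‖(w : lp (fun _ : ℕ => ℝ) ⊤) - twoUpTo (n + 1)‖ ≤ 1 :=
      le_trans (hdist ⟨twoUpTo (n + 1), hmem (n + 1)⟩) h1'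
    have h3' : ‖((w : lp (fun _ : ℕ => ℝ) ⊤) - twoUpTo (n + 1)) n‖ ≤ 1 :=
      le_trans (lp.norm_apply_le_norm ENNReal.top_ne_zero _ n) h2'
    rw [lp.coeFn_sub] at h3'
    simp only [Pi.sub_apply, twoUpTo_apply, if_pos (Nat.lt_succ_self n),
      Real.norm_eq_abs, abs_le] at h3'
    linarith [h3'.1]
  -- contradiction: Λ (w - constOne) ≥ 0 but Λ w = 0, Λ constOne = 1
  have hpos : 0 ≤ Λ ((w : lp (fun _ : ℕ => ℝ) ⊤) - constOne) := by
    apply h1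
    intro n
    rw [lp.coeFn_sub]
    simp only [Pi.sub_apply, constOne_apply]
    linarith [hcoord n]
  have hker : Λ (w : lp (fun _ : ℕ => ℝ) ⊤) = 0 := w.2
  rw [map_sub, hker, hΛone] at hpos
  linarith
end
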